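/- arXiv:1806.03221 — 7 statements merged into one kernel-verified Lean document; each statement's English description precedes it below -/
import Mathlib

section
/- For any pair of positive integers (a,b), the operators C_a on symmetric functions satisfy the commutation relation q(C_b C_a + C_{a-1} C_{b+1}) = C_a C_b + C_{b+1} C_{a-1}. -/
open Polynomial Finset

noncomputable section

abbrev K : Type := RatFunc ℚ

def qq : K := RatFunc.X

abbrev SymF : Type := MvPolynomial ℕ K

def hh : ℕ → SymF
  | 0 => 1
  | n + 1 => MvPolynomial.X n

def himg (q : K) (m : ℕ) : Polynomial SymF :=
  ∑ r ∈ Finset.range (m + 1),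
      Polynomial.C (MvPolynomial.C (q⁻¹ ^ r) * hh (m - r)) * Polynomial.X ^ r -
    ∑ r ∈ Finset.range m,
      Polynomial.C (MvPolynomial.C (q⁻¹ ^ r) * hh (m - 1 - r)) * Polynomial.X ^ (r + 1)

def pleth (q : K) : SymF →ₐ[K] Polynomial SymF :=
  MvPolynomial.aeval fun n => himg q (n + 1)

def Cop (q : K) (a : ℕ) (F : SymF) : SymF :=
  MvPolynomial.C ((-q⁻¹) ^ ((a : ℤ) - 1)) *
    ∑ j ∈ Finset.range ((pleth q F).natDegree + 1), hh (a + j) * (pleth q F).coeff j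

/-!
Write `F[X - (1 - q⁻¹) w] = ∑ⱼ Fⱼ wʲ`, so that `C_a F = (-q⁻¹)^(a-1) ∑ⱼ h_{a+j} Fⱼ`. Since
`h_m[X - (1 - q⁻¹) w] = ∑ᵢ κᵢ h_{m-i} wⁱ` with `κᵢ = hᵢ[q⁻¹ - 1]`, a composition of two such
operators is `C_β C_α F = (-q⁻¹)^(α+β-2) ∑ᵢ κᵢ G(α - i, β + i)`, where `G(m, n)` is the
coefficient of `zᵐ wⁿ` in `F[X - (1 - q⁻¹)(1/z + 1/w)] H(z) H(w)`, hence symmetric in `m`, `n`.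
For `f(s) = G(a + s, b - s)` the four compositions in the relation are the `κ`-weighted sums of
`f(-i)`, `f(i - 1)`, `f(i)` and `f(-1 - i)`, and the relation telescopes because `κ₀ = 1`,
`q κ₁ = 1 - q` and `q κᵢ₊₁ = κᵢ` for `i ≥ 1`.
-/

theorem Polynomial.Bivariate.coeff_coeff_swap {R : Type*} [CommSemiring R]
    (p : Polynomial (Polynomial R)) (i j : ℕ) :
    ((swap p).coeff i).coeff j = (p.coeff j).coeff i := by
  induction p using Polynomial.induction_on' with
  | add p p' hp hp' => simp only [map_add, coeff_add, hp, hp']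
  | monomial n f =>
    induction f using Polynomial.induction_on' with
    | add f g hf hg => simp only [map_add, coeff_add, hf, hg]
    | monomial m r =>
      simp only [swap_monomial_monomial, coeff_monomial]
      split_ifs <;> simp [coeff_monomial, *]

theorem Polynomial.natDegree_lt_of_forall_coeff_eq_zero {R : Type*} [Semiring R] {p : R[X]}
    {N : ℕ} (hN : 0 < N) (h : ∀ l, N ≤ l → p.coeff l = 0) : p.natDegree < N := by
  have := (natDegree_le_iff_coeff_eq_zero (n := N - 1)).mpr fun l hl => h l (by omega)
  omega

def kappa (q : K) : ℕ → K
  | 0 => 1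
  | i + 1 => q⁻¹ ^ (i + 1) - q⁻¹ ^ i

def hhInt (n : ℤ) : SymF := if 0 ≤ n then hh n.toNat else 0

@[simp]
theorem hhInt_natCast (n : ℕ) : hhInt n = hh n := by
  simp [hhInt]

theorem hhInt_of_neg {n : ℤ} (hn : n < 0) : hhInt n = 0 :=
  if_neg hn.not_ge

theorem coeff_himg (q : K) (m i : ℕ) :
    (himg q m).coeff i = MvPolynomial.C (kappa q i) * hhInt ((m : ℤ) - i) := by
  simp only [himg, coeff_sub, finsetSum_coeff, coeff_C_mul_X_pow]
  rcases i with _ | i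
  · simp [kappa]
  · simp only [add_left_inj, Finset.sum_ite_eq, mem_range, add_lt_add_iff_right]
    by_cases him : i < m
    · rw [if_pos him, if_pos him, show (m : ℤ) - (i + 1 : ℕ) = (m - (i + 1) : ℕ) by omega,
        hhInt_natCast, show m - 1 - i = m - (i + 1) by omega, kappa, map_sub, sub_mul]
    · rw [if_neg him, if_neg him, hhInt_of_neg (by omega), sub_zero, mul_zero]

theorem coeff_pleth_hh (q : K) (m i : ℕ) :
    (pleth q (hh m)).coeff i = MvPolynomial.C (kappa q i) * hhInt ((m : ℤ) - i) := by
  rcases m with _ | m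
  · rcases i with _ | i
    · simp [hh, hhInt, kappa]
    · simp [hh, coeff_one, hhInt_of_neg (by omega : -1 + -(i : ℤ) < 0)]
  · exact (congrArg (coeff · i) (MvPolynomial.aeval_X _ m)).trans (coeff_himg q (m + 1) i)

theorem pleth_C (q k : K) : pleth q (MvPolynomial.C k) = C (MvPolynomial.C k) :=
  MvPolynomial.aeval_C _ k

/-- The coefficient of `zⁿ` in `p(1/z) H(z)`, where `H(z) = ∑ₘ hₘ zᵐ`. -/
def hSeriesCoeff (n : ℤ) : SymF[X] →ₗ[SymF] SymF :=
  Polynomial.lsum fun j => LinearMap.mulLeft SymF (hhInt (n + j))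

theorem hSeriesCoeff_apply (n : ℤ) (p : SymF[X]) :
    hSeriesCoeff n p = p.sum fun j c => hhInt (n + j) * c :=
  rfl

theorem hSeriesCoeff_eq_sum_range (n : ℤ) {p : SymF[X]} {N : ℕ} (hp : p.natDegree < N) :
    hSeriesCoeff n p = ∑ j ∈ range N, hhInt (n + j) * p.coeff j :=
  sum_over_range' p (fun _ => mul_zero _) N hp

theorem Cop_eq (q : K) (a : ℕ) (F : SymF) :
    Cop q a F = MvPolynomial.C ((-q⁻¹) ^ ((a : ℤ) - 1)) * hSeriesCoeff a (pleth q F) := by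
  rw [Cop, hSeriesCoeff_eq_sum_range _ (lt_add_one _)]
  simp only [← Nat.cast_add, hhInt_natCast]

theorem hSeriesCoeff_X_pow_mul (n : ℤ) (i : ℕ) (p : SymF[X]) :
    hSeriesCoeff n (X ^ i * p) = hSeriesCoeff (n + i) p := by
  induction p using Polynomial.induction_on' with
  | add p p' hp hp' => rw [mul_add, map_add, map_add, hp, hp']
  | monomial j c =>
    simp only [X_pow_mul_monomial, hSeriesCoeff_apply, sum_monomial_index, mul_zero]
    congr 2
    push_cast
    ring

theorem hSeriesCoeff_mul (n : ℤ) {p : SymF[X]} {N : ℕ} (hp : p.natDegree < N) (r : SymF[X]) :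
    hSeriesCoeff n (p * r) = ∑ i ∈ range N, p.coeff i * hSeriesCoeff (n + i) r := by
  conv_lhs => rw [as_sum_range' p N hp]
  simp only [sum_mul, map_sum, ← C_mul_X_pow_eq_monomial, C_mul', smul_mul_assoc, map_smul,
    hSeriesCoeff_X_pow_mul, smul_eq_mul]

theorem coeff_pleth_hhInt (q : K) (n : ℤ) (i : ℕ) :
    (pleth q (hhInt n)).coeff i = MvPolynomial.C (kappa q i) * hhInt (n - i) := by
  rcases lt_or_ge n 0 with hn | hn
  · rw [hhInt_of_neg hn, hhInt_of_neg (by omega), map_zero, coeff_zero, mul_zero]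
  · lift n to ℕ using hn
    rw [hhInt_natCast, coeff_pleth_hh]

theorem natDegree_pleth_hh_lt (q : K) {m N : ℕ} (h : m < N) : (pleth q (hh m)).natDegree < N :=
  natDegree_lt_of_forall_coeff_eq_zero (by omega) fun i hi => by
    rw [coeff_pleth_hh, hhInt_of_neg (by omega), mul_zero]

/-- `F ↦ F[X - (1 - q⁻¹)(u + w)]`, as a polynomial in `u` over `SymF[w]`. -/
def pleth₂ (q : K) : SymF →ₐ[K] SymF[X][X] :=
  (mapAlgHom (pleth q)).comp (pleth q)

theorem coeff_coeff_pleth₂ (q : K) (F : SymF) (j l : ℕ) :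
    ((pleth₂ q F).coeff j).coeff l = (pleth q ((pleth q F).coeff j)).coeff l := by
  simp [pleth₂, coe_mapAlgHom, coeff_map]

theorem coeff_coeff_pleth₂_hh (q : K) (m j l : ℕ) :
    ((pleth₂ q (hh m)).coeff j).coeff l =
      MvPolynomial.C (kappa q j * kappa q l) * hhInt ((m : ℤ) - j - l) := by
  rw [coeff_coeff_pleth₂, coeff_pleth_hh, map_mul, pleth_C, coeff_C_mul, coeff_pleth_hhInt,
    ← mul_assoc, ← map_mul]

theorem swap_pleth₂ (q : K) (F : SymF) : Bivariate.swap (pleth₂ q F) = pleth₂ q F := by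
  suffices ((Bivariate.swap (R := SymF)).toAlgHom.restrictScalars K).comp (pleth₂ q) =
      pleth₂ q from AlgHom.congr_fun this F
  refine MvPolynomial.algHom_ext fun n => ?_
  refine Polynomial.ext fun j => Polynomial.ext fun l => ?_
  change ((Bivariate.swap (pleth₂ q (hh (n + 1)))).coeff j).coeff l =
    ((pleth₂ q (hh (n + 1))).coeff j).coeff l
  rw [Bivariate.coeff_coeff_swap, coeff_coeff_pleth₂_hh, coeff_coeff_pleth₂_hh,
    mul_comm (kappa q l), sub_right_comm]

theorem coeff_coeff_pleth₂_comm (q : K) (F : SymF) (j l : ℕ) :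
    ((pleth₂ q F).coeff j).coeff l = ((pleth₂ q F).coeff l).coeff j := by
  conv_lhs => rw [← swap_pleth₂]
  exact Bivariate.coeff_coeff_swap _ j l

/-- The coefficient `G(m, n)` of `zᵐ wⁿ` in `F[X - (1 - q⁻¹)(1/z + 1/w)] H(z) H(w)`. -/
def hSeriesCoeff₂ (q : K) (F : SymF) (m n : ℤ) : SymF :=
  (pleth q F).sum fun j c => hhInt (m + j) * hSeriesCoeff n (pleth q c)

theorem hSeriesCoeff₂_eq_sum_range (q : K) (F : SymF) (m n : ℤ) {N : ℕ}
    (hN : (pleth q F).natDegree < N) :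
    hSeriesCoeff₂ q F m n = ∑ j ∈ range N, ∑ l ∈ range N,
      hhInt (m + j) * hhInt (n + l) * ((pleth₂ q F).coeff j).coeff l := by
  rw [hSeriesCoeff₂, sum_over_range' _ (fun _ => by rw [map_zero, map_zero, mul_zero]) N hN]
  refine Finset.sum_congr rfl fun j _ => ?_
  have hdeg : (pleth q ((pleth q F).coeff j)).natDegree < N :=
    natDegree_lt_of_forall_coeff_eq_zero (by omega) fun l hl => by
      rw [← coeff_coeff_pleth₂, coeff_coeff_pleth₂_comm, coeff_coeff_pleth₂,
        coeff_eq_zero_of_natDegree_lt (p := pleth q F) (by omega), map_zero, coeff_zero]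
  simp only [hSeriesCoeff_eq_sum_range n hdeg, mul_sum, coeff_coeff_pleth₂, mul_assoc]

theorem hSeriesCoeff₂_comm (q : K) (F : SymF) (m n : ℤ) :
    hSeriesCoeff₂ q F m n = hSeriesCoeff₂ q F n m := by
  rw [hSeriesCoeff₂_eq_sum_range q F m n (lt_add_one _),
    hSeriesCoeff₂_eq_sum_range q F n m (lt_add_one _), Finset.sum_comm]
  refine Finset.sum_congr rfl fun j _ => Finset.sum_congr rfl fun l _ => ?_
  rw [coeff_coeff_pleth₂_comm, mul_comm (hhInt _)]

theorem hSeriesCoeff₂_eq_zero (q : K) (F : SymF) {m : ℤ} (n : ℤ)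
    (hm : m + (pleth q F).natDegree < 0) : hSeriesCoeff₂ q F m n = 0 :=
  Finset.sum_eq_zero fun j hj => by
    dsimp only
    rw [hhInt_of_neg (by have := le_natDegree_of_mem_supp j hj; omega), zero_mul]

theorem hSeriesCoeff_pleth_hSeriesCoeff (q : K) (F : SymF) (α β : ℕ) {N : ℕ}
    (hN : α + (pleth q F).natDegree < N) :
    hSeriesCoeff β (pleth q (hSeriesCoeff α (pleth q F))) =
      ∑ i ∈ range N, MvPolynomial.C (kappa q i) * hSeriesCoeff₂ q F (α - i) (β + i) := by
  calc
    _ = (pleth q F).sum fun j c => hSeriesCoeff β (pleth q (hh (α + j)) * pleth q c) := by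
      simp only [hSeriesCoeff_apply, sum_def, map_sum, map_mul, ← Nat.cast_add, hhInt_natCast]
    _ = (pleth q F).sum fun j c => ∑ i ∈ range N,
          MvPolynomial.C (kappa q i) * (hhInt (α - i + j) * hSeriesCoeff (β + i) (pleth q c)) :=
      Finset.sum_congr rfl fun j hj => by
        have := le_natDegree_of_mem_supp j hj
        dsimp only
        rw [hSeriesCoeff_mul _ (natDegree_pleth_hh_lt q (m := α + j) (N := N) (by omega))]
        refine Finset.sum_congr rfl fun i _ => ?_
        rw [coeff_pleth_hh, mul_assoc]
        congr 3
        push_cast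
        ring
    _ = _ := by
      simp only [hSeriesCoeff₂, sum_def, mul_sum]
      exact Finset.sum_comm

theorem Cop_Cop {q : K} (hq : q ≠ 0) (F : SymF) (α β : ℕ) {N : ℕ}
    (hN : α + (pleth q F).natDegree < N) :
    Cop q β (Cop q α F) = MvPolynomial.C ((-q⁻¹) ^ ((α : ℤ) + β - 2)) *
      ∑ i ∈ range N, MvPolynomial.C (kappa q i) * hSeriesCoeff₂ q F (α - i) (β + i) := by
  rw [Cop_eq q α, Cop_eq q β, map_mul, pleth_C, C_mul', map_smul, smul_eq_mul,
    hSeriesCoeff_pleth_hSeriesCoeff q F α β hN, ← mul_assoc, ← map_mul,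
    ← zpow_add₀ (by simpa using hq), sub_add_sub_comm, one_add_one_eq_two,
    add_comm (β : ℤ) α]

theorem mul_kappa_one {q : K} (hq : q ≠ 0) : q * kappa q 1 = 1 - q := by
  simp [kappa, mul_sub, hq]

theorem mul_kappa_add_two {q : K} (hq : q ≠ 0) (i : ℕ) : q * kappa q (i + 2) = kappa q (i + 1) := by
  simp only [kappa, mul_sub, pow_succ', ← mul_assoc, mul_inv_cancel₀ hq, one_mul]

theorem mul_sum_kappa {q : K} (hq : q ≠ 0) (u : ℕ → SymF) {N : ℕ} (hN : 2 ≤ N) (hu : u N = 0) :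
    MvPolynomial.C q * ∑ i ∈ range N, MvPolynomial.C (kappa q i) * u i =
      MvPolynomial.C q * (u 0 - u 1) +
        ∑ i ∈ range N, MvPolynomial.C (kappa q i) * u (i + 1) := by
  obtain ⟨M, rfl⟩ : ∃ M, N = M + 2 := ⟨N - 2, by omega⟩
  have hshift : MvPolynomial.C q * ∑ i ∈ range M, MvPolynomial.C (kappa q (i + 2)) * u (i + 2) =
      ∑ i ∈ range M, MvPolynomial.C (kappa q (i + 1)) * u (i + 2) := by
    simp only [mul_sum, ← mul_assoc, ← map_mul, mul_kappa_add_two hq]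
  have hone : MvPolynomial.C q * MvPolynomial.C (kappa q 1) = (1 - MvPolynomial.C q : SymF) := by
    rw [← map_mul, mul_kappa_one hq, map_sub, map_one]
  rw [sum_range_succ' _ (M + 1), sum_range_succ' _ M, sum_range_succ' _ (M + 1),
    sum_range_succ _ M, hu]
  simp only [show kappa q 0 = 1 from rfl, map_one, one_mul, mul_zero, add_zero, zero_add]
  linear_combination hshift + u 1 * hone

theorem sum_kappa_relation {q : K} (hq : q ≠ 0) (f : ℤ → SymF) {N : ℕ} (hN : 2 ≤ N)
    (hf₁ : f (-N) = 0) (hf₂ : f (N - 1) = 0) :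
    MvPolynomial.C q * ((∑ i ∈ range N, MvPolynomial.C (kappa q i) * f (-i)) +
        ∑ i ∈ range N, MvPolynomial.C (kappa q i) * f (i - 1)) =
      (∑ i ∈ range N, MvPolynomial.C (kappa q i) * f i) +
        ∑ i ∈ range N, MvPolynomial.C (kappa q i) * f (-1 - i) := by
  have h₁ := mul_sum_kappa hq (fun i => f (-i)) hN hf₁
  have h₂ := mul_sum_kappa hq (fun i => f (i - 1)) hN hf₂
  simp only [Nat.cast_add, Nat.cast_one, Nat.cast_zero, neg_zero, zero_sub, add_sub_cancel_right,
    sub_self, neg_add_rev] at h₁ h₂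
  rw [mul_add, h₁, h₂]
  simp only [← sub_eq_add_neg]
  ring

theorem stmt0_general (a b : ℕ) (ha : 1 ≤ a) (F : SymF) :
    MvPolynomial.C qq *
        (Cop qq b (Cop qq a F) + Cop qq (a - 1) (Cop qq (b + 1) F)) =
      Cop qq a (Cop qq b F) + Cop qq (b + 1) (Cop qq (a - 1) F) := by
  have hq : qq ≠ 0 := RatFunc.X_ne_zero
  set d := (pleth qq F).natDegree
  set N := a + b + d + 2
  set E : K := (-qq⁻¹) ^ ((a : ℤ) + b - 2)
  set f : ℤ → SymF := fun s => hSeriesCoeff₂ qq F (a + s) (b - s)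
  have hcomp : ∀ (α β : ℕ) (g : ℕ → ℤ), (α : ℤ) + β = a + b → α + d < N →
      (∀ i : ℕ, hSeriesCoeff₂ qq F (α - i) (β + i) = f (g i)) →
      Cop qq β (Cop qq α F) =
        MvPolynomial.C E * ∑ i ∈ range N, MvPolynomial.C (kappa qq i) * f (g i) := by
    intro α β g hαβ hα hg
    simp only [Cop_Cop hq F α β hα, hαβ, hg, E]
  have hcast : ((a - 1 : ℕ) : ℤ) = a - 1 := by omega
  have hba := hcomp a b (fun i => -i) rfl (by omega) fun i => by simp only [f]; congr 1; ring
  have ha₁b₁ := hcomp (b + 1) (a - 1) (fun i => i - 1) (by push_cast [hcast]; ring) (by omega)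
    fun i => by rw [hSeriesCoeff₂_comm]; simp only [f]; congr 1 <;> push_cast [hcast] <;> ring
  have hab := hcomp b a (fun i => i) (add_comm _ _) (by omega) fun i => hSeriesCoeff₂_comm qq F _ _
  have hb₁a₁ := hcomp (a - 1) (b + 1) (fun i => -1 - i) (by push_cast [hcast]; ring) (by omega)
    fun i => by simp only [f]; congr 1 <;> push_cast [hcast] <;> ring
  rw [hba, ha₁b₁, hab, hb₁a₁, ← mul_add, ← mul_add, mul_left_comm,
    sum_kappa_relation hq f (by omega) (hSeriesCoeff₂_eq_zero qq F _ (by omega))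
      ((hSeriesCoeff₂_comm qq F _ _).trans (hSeriesCoeff₂_eq_zero qq F _ (by omega)))]

/-- for any pair of positive integers (a,b), the operators C_a satisfy
q(C_b C_a + C_{a-1} C_{b+1}) = C_a C_b + C_{b+1} C_{a-1}. -/
theorem stmt0 (a b : ℕ) (ha : 1 ≤ a) (hb : 1 ≤ b) (F : SymF) :
    MvPolynomial.C qq *
        (Cop qq b (Cop qq a F) + Cop qq (a - 1) (Cop qq (b + 1) F)) =
      Cop qq a (Cop qq b F) + Cop qq (b + 1) (Cop qq (a - 1) F) :=
  stmt0_general a b ha F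

end
end

section
/- For any legal schedule W = (w_1,...,w_{k-1}), specializing all variables x_i to 1 in P_W gives P_W[X_k;q]|_{x_i=1 for all i} = (1+q) · Π_{i=1}^{k-1} [w_i]_q, where [w]_q = 1 + q + ... + q^{w-1}. -/
open Polynomial Finset

noncomputable section

def qint (q : K) (n : ℕ) : K := ∑ i ∈ Finset.range n, q ^ i

def Legal (W : List ℕ) : Prop :=
  (∀ h : W ≠ [], 1 ≤ W.head h ∧ W.head h ≤ 2) ∧
    List.Chain' (fun a b => 1 ≤ b ∧ b ≤ a + 1) W

def Prev (q : K) : List ℕ → MvPolynomial ℤ K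
  | [] => MvPolynomial.C q * MvPolynomial.X (-1) + MvPolynomial.X 0
  | w :: V =>
      MvPolynomial.C ((1 - q)⁻¹) *
        ((MvPolynomial.X ((V.length : ℤ) + 1) - MvPolynomial.C (q ^ w)) * Prev q V +
          (1 - MvPolynomial.X ((V.length : ℤ) + 1)) *
            MvPolynomial.aeval
              (fun j : ℤ =>
                if (V.length : ℤ) + 1 - (w : ℤ) ≤ j ∧ j ≤ (V.length : ℤ) then
                  MvPolynomial.C q * MvPolynomial.X j
                else MvPolynomial.X j)
              (Prev q V))

def Psched (q : K) (W : List ℕ) : MvPolynomial ℤ K := Prev q W.reverse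

def Qsched (q : K) (W : List ℕ) : Polynomial K :=
  MvPolynomial.aeval (fun _ : ℤ => (Polynomial.X : Polynomial K)) (Psched q W)

def TameFE (q : K) (W : List ℕ) : Prop :=
  ∀ x : K, x ≠ 0 →
    (1 - q / x) * (Qsched q W).eval x +
        x ^ (W.length + 1) * (1 - q * x) * (Qsched q W).eval x⁻¹ =
      (1 + x ^ (W.length + 1)) * ((1 - q ^ 2) * (W.map (qint q)).prod)

/-! At `x ≡ 1` the factor `1 - x_k` kills the substituted term of the recursion, so each step
multiplies the value by `(1 - q ^ w) / (1 - q) = [w]_q`, starting from `P_∅(1) = 1 + q`. -/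

lemma qq_ne_one : qq ≠ 1 := by
  rw [qq, ← RatFunc.algebraMap_X, ← map_one (algebraMap (Polynomial ℚ) K), Ne,
    (RatFunc.algebraMap_injective ℚ).eq_iff]
  simpa using Polynomial.X_ne_C (1 : ℚ)

lemma inv_one_sub_mul_one_sub_pow {q : K} (hq : q ≠ 1) (w : ℕ) :
    (1 - q)⁻¹ * (1 - q ^ w) = qint q w := by
  rw [qint, geom_sum_eq hq, inv_mul_eq_div, ← neg_div_neg_eq, neg_sub, neg_sub]

lemma eval_one_prev {q : K} (hq : q ≠ 1) (V : List ℕ) :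
    MvPolynomial.eval (fun _ : ℤ => (1 : K)) (Prev q V) = (1 + q) * (V.map (qint q)).prod := by
  induction V with
  | nil => simp [Prev, add_comm]
  | cons w V ih =>
    simp only [Prev, map_add, map_mul, map_sub, map_one, MvPolynomial.eval_C,
      MvPolynomial.eval_X, sub_self, zero_mul, add_zero, ih, List.map_cons, List.prod_cons,
      ← inv_one_sub_mul_one_sub_pow hq w]
    ring

theorem stmt2_general (W : List ℕ) :
    MvPolynomial.eval (fun _ : ℤ => (1 : K)) (Psched qq W) =
      (1 + qq) * (W.map (qint qq)).prod := by
  rw [Psched, eval_one_prev qq_ne_one, List.map_reverse, List.prod_reverse]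

/-- specializing all variables to 1 in P_W gives (1+q)·∏ [w_i]_q. -/
theorem stmt2 (W : List ℕ) (hW : Legal W) :
    MvPolynomial.eval (fun _ : ℤ => (1 : K)) (Psched qq W) =
      (1 + qq) * (W.map (qint qq)).prod :=
  stmt2_general W

end
end

section
/- The complementation identity: for all legal schedules W = (w_1,...,w_{k-1}), P_W(X_k;q) = x_{-1} x_0 x_1 ⋯ x_{k-1} · q^{1 + Σ_{i=1}^{k-1}(w_i - 1)} · P_W(1/x_{-1}, 1/x_0, ..., 1/x_{k-1}; 1/q). -/
open Polynomial Finset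

noncomputable section

/-! Induction on the schedule, for any `q ≠ 0, 1`. Appending `w` to a schedule of length `n`
evaluates the old polynomial at `v` and at `v` rescaled by `q` on the window `[n + 1 - w, n]`.
Legality puts that window inside `[-1, n]`, so the rescaling multiplies `∏ v` by exactly `q ^ w`,
and inverting the rescaled point is the same as rescaling `1/v` by `1/q`. Applying the
induction hypothesis to both evaluations, the recursions at `(v, q)` and at `(1/v, 1/q)` agree
up to the extra factor `v (n + 1) * q ^ (w - 1)`. -/

section WindowScaling

variable {M : Type*}

/-- Evaluating after the substitution `x_j ↦ c x_j` for `a ≤ j ≤ b` is evaluating at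
`scaleOn c a b v`. -/
def scaleOn [Mul M] (c : M) (a b : ℤ) (v : ℤ → M) (j : ℤ) : M :=
  if a ≤ j ∧ j ≤ b then c * v j else v j

lemma scaleOn_ne_zero [MulZeroClass M] [NoZeroDivisors M] {c : M} (hc : c ≠ 0) (a b : ℤ)
    {v : ℤ → M} (hv : ∀ i, v i ≠ 0) (j : ℤ) : scaleOn c a b v j ≠ 0 := by
  unfold scaleOn
  split_ifs
  · exact mul_ne_zero hc (hv j)
  · exact hv j

lemma inv_scaleOn [DivisionCommMonoid M] (c : M) (a b : ℤ) (v : ℤ → M) :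
    (fun j => (scaleOn c a b v j)⁻¹) = scaleOn c⁻¹ a b (fun j => (v j)⁻¹) := by
  funext j
  unfold scaleOn
  split_ifs <;> simp [mul_comm]

lemma prod_Icc_scaleOn [CommMonoid M] (c : M) {a b lo hi : ℤ} (hlo : lo ≤ a) (hhi : b ≤ hi)
    (v : ℤ → M) :
    ∏ j ∈ Icc lo hi, scaleOn c a b v j = c ^ (b + 1 - a).toNat * ∏ j ∈ Icc lo hi, v j := by
  have hwindow : (Icc lo hi).filter (fun j => a ≤ j ∧ j ≤ b) = Icc a b := by
    ext j
    simp only [mem_filter, mem_Icc]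
    omega
  rw [show ∏ j ∈ Icc lo hi, scaleOn c a b v j = _ from prod_ite .., prod_mul_distrib,
    prod_const, mul_assoc, prod_filter_mul_prod_filter_not, hwindow, Int.card_Icc]

end WindowScaling

lemma MvPolynomial.eval_aeval {R σ τ : Type*} [CommSemiring R] (v : τ → R)
    (f : σ → MvPolynomial τ R) (p : MvPolynomial σ R) :
    eval v (aeval f p) = eval (fun i => eval v (f i)) p := by
  rw [aeval_eq_bind₁]
  exact eval₂Hom_bind₁ _ _ _ _

lemma eval_Prev_cons (q : K) (w : ℕ) (V : List ℕ) (v : ℤ → K) :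
    MvPolynomial.eval v (Prev q (w :: V)) =
      (1 - q)⁻¹ * ((v (V.length + 1) - q ^ w) * MvPolynomial.eval v (Prev q V) +
        (1 - v (V.length + 1)) *
          MvPolynomial.eval (scaleOn q (V.length + 1 - w) V.length v) (Prev q V)) := by
  simp only [Prev, map_add, map_mul, map_sub, map_one, MvPolynomial.eval_C, MvPolynomial.eval_X,
    MvPolynomial.eval_aeval]
  congr 4
  refine congrArg _ (funext fun j => ?_)
  unfold scaleOn
  split_ifs <;> simp

lemma complement_recursion_step {F : Type*} [Field F] {q x : F} (hq0 : q ≠ 0) (hq1 : q ≠ 1)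
    (hx : x ≠ 0) (m e : ℕ) (P A B : F) :
    (1 - q)⁻¹ * ((x - q ^ (m + 1)) * (P * q ^ e * A) + (1 - x) * (q ^ (m + 1) * P * q ^ e * B)) =
      x * P * q ^ (e + m) *
        ((1 - q⁻¹)⁻¹ * ((x⁻¹ - q⁻¹ ^ (m + 1)) * A + (1 - x⁻¹) * B)) := by
  have h1q : 1 - q ≠ 0 := sub_ne_zero.mpr hq1.symm
  have h1q' : q - 1 ≠ 0 := sub_ne_zero.mpr hq1
  rw [show (1 - q⁻¹)⁻¹ = -q * (1 - q)⁻¹ by field_simp; ring, inv_pow]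
  field_simp
  ring

lemma Legal.getElem_bounds {W : List ℕ} (hW : Legal W) (j : ℕ) (hj : j < W.length) :
    1 ≤ W[j] ∧ W[j] ≤ j + 2 := by
  obtain ⟨hhead, hchain⟩ := hW
  induction j with
  | zero =>
    obtain _ | ⟨a, W⟩ := W
    · simp at hj
    · simpa using hhead (List.cons_ne_nil a W)
  | succ j ih =>
    have hstep := List.isChain_iff_getElem.mp hchain j hj
    have := ih (by omega)
    omega

theorem eval_Psched_complement {q : K} (hq0 : q ≠ 0) (hq1 : q ≠ 1) (W : List ℕ)
    (hW : ∀ j (hj : j < W.length), 1 ≤ W[j] ∧ W[j] ≤ j + 2) (v : ℤ → K)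
    (hv : ∀ i, v i ≠ 0) :
    MvPolynomial.eval v (Psched q W) =
      (∏ i ∈ Icc (-1 : ℤ) W.length, v i) * q ^ (1 + (W.map (· - 1)).sum) *
        MvPolynomial.eval (fun i => (v i)⁻¹) (Psched q⁻¹ W) := by
  induction W using List.reverseRecOn generalizing v with
  | nil =>
    have h0 := hv 0
    have h1 := hv (-1)
    simp only [Psched, List.reverse_nil, Prev, map_add, map_mul, MvPolynomial.eval_C,
      MvPolynomial.eval_X, List.length_nil, List.map_nil, List.sum_nil]
    rw [show Icc (-1 : ℤ) ((0 : ℕ) : ℤ) = {-1, 0} by decide, prod_pair (by decide)]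
    field_simp
    ring
  | append_singleton W w ih =>
    obtain ⟨hw1, hw2⟩ : 1 ≤ w ∧ w ≤ W.length + 2 := by simpa using hW W.length (by simp)
    have hWprefix : ∀ j (hj : j < W.length), 1 ≤ W[j] ∧ W[j] ≤ j + 2 := fun j hj => by
      have h := hW j (by simp; omega)
      rwa [List.getElem_append_left hj] at h
    obtain ⟨m, rfl⟩ : ∃ m, w = m + 1 := ⟨w - 1, by omega⟩
    simp only [Psched, List.reverse_append, List.reverse_singleton, List.singleton_append,
      eval_Prev_cons, List.length_reverse, List.length_append, List.length_singleton,
      Nat.cast_add, Nat.cast_one, List.map_append, List.sum_append, List.map_singleton,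
      List.sum_singleton, Nat.add_sub_cancel]
    rw [← Psched, ← Psched]
    have hprod_scaled :
        ∏ i ∈ Icc (-1 : ℤ) W.length, scaleOn q (W.length + 1 - (m + 1)) W.length v i =
          q ^ (m + 1) * ∏ i ∈ Icc (-1 : ℤ) W.length, v i := by
      rw [prod_Icc_scaleOn q (by omega) le_rfl]
      congr 2
      omega
    have htop : ∏ i ∈ Icc (-1 : ℤ) (W.length + 1), v i =
        v (W.length + 1) * ∏ i ∈ Icc (-1 : ℤ) W.length, v i := by
      rw [← insert_Icc_right_eq_Icc_add_one (by omega), prod_insert (by simp)]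
    rw [ih hWprefix v hv, ih hWprefix _ (scaleOn_ne_zero hq0 _ _ hv), hprod_scaled, inv_scaleOn,
      htop, show 1 + ((W.map (· - 1)).sum + m) = (1 + (W.map (· - 1)).sum) + m by ring]
    exact complement_recursion_step hq0 hq1 (hv _) _ _ _ _ _

/-- complementation identity: for all legal schedules W (of length k-1),
P_W(X_k;q) = x_{-1}⋯x_{k-1} · q^{1+Σ(w_i-1)} · P_W(1/x_{-1},…,1/x_{k-1};1/q),
stated via evaluation at an arbitrary assignment of nonzero values to the variables. -/
theorem stmt5 (W : List ℕ) (hW : Legal W) (v : ℤ → K) (hv : ∀ i : ℤ, v i ≠ 0) :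
    MvPolynomial.eval v (Psched qq W) =
      (∏ i ∈ Finset.Icc (-1 : ℤ) (W.length : ℤ), v i) *
        qq ^ (1 + (W.map (fun w => w - 1)).sum) *
          MvPolynomial.eval (fun i : ℤ => (v i)⁻¹) (Psched qq⁻¹ W) := by
  have hq1 : qq ≠ 1 := fun h => by simpa [qq] using congrArg RatFunc.intDegree h
  exact eval_Psched_complement RatFunc.X_ne_zero hq1 W hW.getElem_bounds v hv

end
end

section
/- For any legal schedule of the form W = (1, w_2, ..., w_{k-1}), the polynomial Q_W(x;q) has the form Q_W(x;q) = A_1(q) x + A_k(q) x^k with A_1(q) = q A_k(q) and A_k(q) = Π_{i=1}^{k-1} [w_i]_q; in particular Q_W satisfies the functional equation (1-q/x)Q_W(x;q) + x^k(1-qx)Q_W(1/x;q) = (1+x^k)(1-q^2)Π_{i=1}^{k-1}[w_i]_q. -/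
open Polynomial Finset

noncomputable section

/-! Each step of the recursion preserves the shape `q A x₋₁ + A x₀ x₁ ⋯ xₙ`: the substitution
`x_j ↦ q x_j` on the last `w` variables fixes `x₋₁` and, because `w ≤ n + 1`, multiplies the
monomial by `q ^ w`; the recursion then multiplies both coefficients by `(1 - q ^ w) / (1 - q) = [w]_q`
and the monomial by `xₙ₊₁`. Setting all variables to `x` gives `Q_W = q A x + A x ^ k`, for which
the functional equation is a direct computation. The bound `w_i ≤ i` needed at each step holds
for legal schedules starting with `w₁ = 1`, since a legal schedule grows by at most one per step. -/

lemma one_sub_qq_ne_zero : (1 : K) - qq ≠ 0 := by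
  rw [sub_ne_zero]
  intro h
  have hdeg : RatFunc.intDegree qq = 1 := RatFunc.intDegree_X
  rw [← h, RatFunc.intDegree_one] at hdeg
  exact zero_ne_one hdeg

lemma List.IsChain.getElem_le_add {l : List ℕ} (hl : l.IsChain fun a b => b ≤ a + 1) :
    ∀ (i : ℕ) (hi : i < l.length), l[i] ≤ l[0] + i
  | 0, _ => le_rfl
  | i + 1, hi => by
    have hstep := List.isChain_iff_getElem.mp hl i hi
    have := hl.getElem_le_add i (by omega)
    omega

def windowScale (q : K) (m w : ℕ) (j : ℤ) : MvPolynomial ℤ K :=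
  if (m : ℤ) + 1 - (w : ℤ) ≤ j ∧ j ≤ (m : ℤ) then MvPolynomial.C q * MvPolynomial.X j
  else MvPolynomial.X j

section windowScale

variable {q : K} {m w : ℕ}

lemma aeval_windowScale_X_neg_one (hw : w ≤ m + 1) :
    MvPolynomial.aeval (windowScale q m w) (MvPolynomial.X (-1) : MvPolynomial ℤ K) =
      MvPolynomial.X (-1) := by
  rw [MvPolynomial.aeval_X, windowScale, if_neg (by omega)]

lemma aeval_windowScale_prod_X (hw : w ≤ m + 1) :
    MvPolynomial.aeval (windowScale q m w)
        (∏ j ∈ range (m + 1), MvPolynomial.X (j : ℤ) : MvPolynomial ℤ K) =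
      MvPolynomial.C (q ^ w) * ∏ j ∈ range (m + 1), MvPolynomial.X (j : ℤ) := by
  have hfactor : ∀ j ∈ range (m + 1), windowScale q m w j =
      (if m + 1 - w ≤ j then MvPolynomial.C q else 1) * MvPolynomial.X (j : ℤ) := by
    intro j hj
    rw [mem_range] at hj
    unfold windowScale
    split_ifs <;> first | omega | simp only [one_mul]
  have hcard : #{j ∈ range (m + 1) | m + 1 - w ≤ j} = w := by
    rw [show {j ∈ range (m + 1) | m + 1 - w ≤ j} = Ico (m + 1 - w) (m + 1) by ext; simp; omega,
      Nat.card_Ico]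
    omega
  simp only [map_prod, MvPolynomial.aeval_X]
  rw [prod_congr rfl hfactor, prod_mul_distrib, prod_ite, prod_const, prod_const_one, mul_one,
    hcard, map_pow]

end windowScale

lemma psched_append_singleton (q : K) (W : List ℕ) (w : ℕ) :
    Psched q (W ++ [w]) =
      MvPolynomial.C (1 - q)⁻¹ *
        ((MvPolynomial.X ((W.length : ℤ) + 1) - MvPolynomial.C (q ^ w)) * Psched q W +
          (1 - MvPolynomial.X ((W.length : ℤ) + 1)) *
            MvPolynomial.aeval (windowScale q W.length w) (Psched q W)) := by
  simp only [Psched, List.reverse_append, List.reverse_singleton, List.singleton_append, Prev,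
    List.length_reverse]
  rfl

lemma qint_eq_inv_mul {q : K} (hq : 1 - q ≠ 0) (w : ℕ) : qint q w = (1 - q)⁻¹ * (1 - q ^ w) := by
  rw [← mul_neg_geom_sum, inv_mul_cancel_left₀ hq, qint]

theorem psched_eq_of_getElem_le {q : K} (hq : 1 - q ≠ 0) {W : List ℕ}
    (hW : ∀ (i : ℕ) (hi : i < W.length), W[i] ≤ i + 1) :
    Psched q W =
      MvPolynomial.C (q * (W.map (qint q)).prod) * MvPolynomial.X (-1) +
        MvPolynomial.C (W.map (qint q)).prod *
          ∏ j ∈ range (W.length + 1), MvPolynomial.X (j : ℤ) := by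
  induction W using List.reverseRecOn with
  | nil => simp [Psched, Prev]
  | append_singleton W w ih =>
    have hw : w ≤ W.length + 1 := by simpa using hW W.length (by simp)
    have hW' : ∀ (i : ℕ) (hi : i < W.length), W[i] ≤ i + 1 := fun i hi => by
      have := hW i (by simp; omega)
      rwa [List.getElem_append_left] at this
    rw [psched_append_singleton, ih hW']
    simp only [map_add, map_mul, MvPolynomial.aeval_C, MvPolynomial.algebraMap_eq,
      List.length_append, List.length_singleton, List.map_append, List.map_singleton,
      List.prod_append, List.prod_singleton, qint_eq_inv_mul hq w, prod_range_succ _ (W.length + 1)]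
    rw [aeval_windowScale_X_neg_one hw, aeval_windowScale_prod_X hw]
    push_cast
    simp only [map_sub, map_one, map_pow]
    ring

theorem qsched_eq_of_getElem_le {q : K} (hq : 1 - q ≠ 0) {W : List ℕ}
    (hW : ∀ (i : ℕ) (hi : i < W.length), W[i] ≤ i + 1) :
    Qsched q W =
      C (q * (W.map (qint q)).prod) * X + C (W.map (qint q)).prod * X ^ (W.length + 1) := by
  simp only [Qsched, psched_eq_of_getElem_le hq hW, map_add, map_mul, map_prod,
    MvPolynomial.aeval_C, MvPolynomial.aeval_X, Polynomial.algebraMap_eq, prod_const, card_range]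

theorem tameFE_of_qsched_eq {q : K} {W : List ℕ}
    (hQ : Qsched q W =
      C (q * (W.map (qint q)).prod) * X + C (W.map (qint q)).prod * X ^ (W.length + 1)) :
    TameFE q W := by
  intro x hx
  simp only [hQ, eval_add, eval_mul, eval_C, eval_X, eval_pow, inv_pow]
  field_simp
  ring

/-- for a legal schedule W = (1,w_2,…,w_{k-1}),
Q_W(x;q) = A_1 x + A_k x^k with A_1 = q·A_k and A_k = ∏[w_i]_q, and Q_W
satisfies the functional equation. Here k = (1::W').length + 1. -/
theorem stmt7 (W' : List ℕ) (hW : Legal (1 :: W')) :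
    Qsched qq (1 :: W') =
        Polynomial.C (qq * ((1 :: W').map (qint qq)).prod) * Polynomial.X +
          Polynomial.C (((1 :: W').map (qint qq)).prod) * Polynomial.X ^ (W'.length + 2) ∧
      TameFE qq (1 :: W') := by
  have hle : ∀ (i : ℕ) (hi : i < (1 :: W').length), (1 :: W')[i] ≤ i + 1 := fun i hi => by
    simpa [add_comm] using (hW.2.imp fun _ _ hab => hab.2).getElem_le_add i hi
  have hQ := qsched_eq_of_getElem_le one_sub_qq_ne_zero hle
  exact ⟨hQ, tameFE_of_qsched_eq hQ⟩

end
end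

section
/- If both schedules W' = (w_1,...,w_{k-2}) and W = (w_1,...,w_{k-1}) are tame, then the schedule (W,1) = (w_1,...,w_{k-1},1) is tame, and more generally every legal schedule of the form (w_1,...,w_{k-1},1,v_2,...,v_s) is tame. -/
open Polynomial Finset

noncomputable section

lemma qint_eq {q : K} (hq : q ≠ 1) (n : ℕ) : qint q n = (1 - q)⁻¹ * (1 - q ^ n) := by
  rw [qint, geom_sum_eq hq]
  field_simp
  ring

def SatisfiesFE (q : K) (m : ℕ) (c : K) (f : K[X]) : Prop :=
  ∀ x : K, x ≠ 0 →
    (1 - q / x) * f.eval x + x ^ m * (1 - q * x) * f.eval x⁻¹ = (1 + x ^ m) * ((1 - q ^ 2) * c)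

lemma tameFE_iff {q : K} {W : List ℕ} :
    TameFE q W ↔ SatisfiesFE q (W.length + 1) (W.map (qint q)).prod (Qsched q W) :=
  Iff.rfl

namespace SatisfiesFE

variable {q c : K} {m : ℕ} {f a b : K[X]}

lemma C_mul (h : SatisfiesFE q m c f) (d : K) : SatisfiesFE q m (d * c) (C d * f) := fun x hx => by
  simp only [eval_mul, eval_C]
  linear_combination d * h x hx

lemma C_mul_X_add_one (q : K) : SatisfiesFE q 0 1 (C q * X + 1) := fun x hx => by
  simp only [eval_add, eval_mul, eval_C, eval_X, eval_one]
  linear_combination -2 * q ^ 2 * mul_inv_cancel₀ hx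

/-- `F k := (1 - q/x) f_k(x) + x^(m+k) (1 - qx) f_k(1/x) - (1 + x^(m+k)) (1 - q²) c` with
`f_k = a + b X^k` satisfies `F (k+1) = x F k + (F 1 - x F 0)`. -/
lemma add_mul_X_pow (h₀ : SatisfiesFE q m c (a + b)) (h₁ : SatisfiesFE q (m + 1) c (a + b * X))
    (k : ℕ) : SatisfiesFE q (m + k) c (a + b * X ^ k) := by
  induction k with
  | zero => simpa using h₀
  | succ k ih =>
    intro x hx
    have hk : x ^ k * x⁻¹ ^ k = 1 := by rw [← mul_pow, mul_inv_cancel₀ hx, one_pow]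
    have e₀ := h₀ x hx
    have e₁ := h₁ x hx
    have e := ih x hx
    simp only [eval_add, eval_mul, eval_pow, eval_X] at e₀ e₁ e ⊢
    linear_combination x * e + e₁ - x * e₀
      + x ^ (m + 1) * (1 - q * x) * b.eval x⁻¹ * (x⁻¹ - 1) * hk

end SatisfiesFE

namespace MvPolynomial

variable {σ R : Type*} [CommSemiring R] {s : Set σ} {p : MvPolynomial σ R}

lemma aeval_eq_self_of_mem_supported (hp : p ∈ supported R s) {f : σ → MvPolynomial σ R}
    (hf : ∀ i ∈ s, f i = X i) : aeval f p = p := by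
  rw [supported_eq_range_rename, AlgHom.mem_range] at hp
  obtain ⟨p, rfl⟩ := hp
  have hfX : f ∘ ((↑) : s → σ) = X ∘ (↑) := _root_.funext fun i => hf i i.2
  rw [aeval_rename, hfX, ← aeval_rename, aeval_X_left_apply]

lemma aeval_mem_supported (hp : p ∈ supported R s) {f : σ → MvPolynomial σ R}
    (hf : ∀ i ∈ s, f i ∈ supported R s) : aeval f p ∈ supported R s := by
  rw [supported_eq_range_rename, AlgHom.mem_range] at hp
  obtain ⟨p, rfl⟩ := hp
  rw [aeval_rename]
  have hle : (aeval (f ∘ ((↑) : s → σ))).range ≤ supported R s := by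
    rw [aeval_range, Algebra.adjoin_le_iff]
    rintro _ ⟨i, rfl⟩
    exact hf i i.2
  exact hle ⟨p, rfl⟩

end MvPolynomial

section Schedule

open MvPolynomial (supported)

variable {q : K}

def scaleVars (q : K) (n : ℤ) (w : ℕ) (j : ℤ) : MvPolynomial ℤ K :=
  if n + 1 - w ≤ j ∧ j ≤ n then MvPolynomial.C q * MvPolynomial.X j else MvPolynomial.X j

lemma prev_cons (q : K) (w : ℕ) (V : List ℕ) :
    Prev q (w :: V) = MvPolynomial.C (1 - q)⁻¹ *
      ((MvPolynomial.X ((V.length : ℤ) + 1) - MvPolynomial.C (q ^ w)) * Prev q V +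
        (1 - MvPolynomial.X ((V.length : ℤ) + 1)) *
          MvPolynomial.aeval (scaleVars q V.length w) (Prev q V)) :=
  rfl

lemma aeval_scaleVars_mem_supported {s : Set ℤ} {p : MvPolynomial ℤ K}
    (hp : p ∈ supported K s) (n : ℤ) (w : ℕ) :
    MvPolynomial.aeval (scaleVars q n w) p ∈ supported K s :=
  MvPolynomial.aeval_mem_supported hp fun j hj => by
    have hX : MvPolynomial.X j ∈ supported K s := MvPolynomial.X_mem_supported.2 hj
    unfold scaleVars
    split_ifs
    exacts [mul_mem (Subalgebra.algebraMap_mem _ q) hX, hX]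

lemma prev_mem_supported (q : K) (V : List ℕ) :
    Prev q V ∈ supported K (Set.Iic (V.length : ℤ)) := by
  induction V with
  | nil =>
    exact add_mem
      (mul_mem (Subalgebra.algebraMap_mem _ q) (MvPolynomial.X_mem_supported.2 (by simp)))
      (MvPolynomial.X_mem_supported.2 (by simp))
  | cons w V ih =>
    set S := supported K (Set.Iic ((w :: V).length : ℤ))
    have hmono : supported K (Set.Iic (V.length : ℤ)) ≤ S :=
      MvPolynomial.supported_mono (Set.Iic_subset_Iic.2 (by simp))
    have hX : MvPolynomial.X ((V.length : ℤ) + 1) ∈ S :=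
      MvPolynomial.X_mem_supported.2 (by simp)
    have hC (c : K) : MvPolynomial.C c ∈ S := Subalgebra.algebraMap_mem _ c
    rw [prev_cons]
    exact mul_mem (hC _) (add_mem (mul_mem (sub_mem hX (hC _)) (hmono ih))
      (mul_mem (sub_mem (one_mem _) hX) (hmono (aeval_scaleVars_mem_supported ih _ _))))

lemma aeval_scaleVars_prod (q : K) (k : ℤ) (m w : ℕ) (hw : w ≤ m + 1) :
    MvPolynomial.aeval (scaleVars q (k + m) w)
        (∏ j ∈ range (m + 1), (MvPolynomial.X (k + j) : MvPolynomial ℤ K)) =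
      MvPolynomial.C (q ^ w) * ∏ j ∈ range (m + 1), MvPolynomial.X (k + j) := by
  have hfac : ∀ j ∈ range (m + 1), MvPolynomial.aeval (scaleVars q (k + m) w)
      (MvPolynomial.X (k + j) : MvPolynomial ℤ K) =
        (if m + 1 - w ≤ j then MvPolynomial.C q else 1 : MvPolynomial ℤ K) *
          MvPolynomial.X (k + j) := by
    intro j hj
    rw [mem_range] at hj
    by_cases hjw : m + 1 - w ≤ j
    · rw [MvPolynomial.aeval_X, scaleVars, if_pos (by omega), if_pos hjw]
    · rw [MvPolynomial.aeval_X, scaleVars, if_neg (by omega), if_neg hjw, one_mul]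
  have hcard : #{j ∈ range (m + 1) | m + 1 - w ≤ j} = w := by
    rw [show {j ∈ range (m + 1) | m + 1 - w ≤ j} = Ico (m + 1 - w) (m + 1) by
      ext; simp only [mem_filter, mem_range, mem_Ico]; omega]
    rw [Nat.card_Ico]
    omega
  rw [map_prod, prod_congr rfl hfac, prod_mul_distrib, prod_ite, prod_const, prod_const_one,
    mul_one, hcard, map_pow]

theorem psched_append (hq : q ≠ 1) {W T : List ℕ} {A B : MvPolynomial ℤ K}
    (hA : A ∈ supported K (Set.Iio (W.length : ℤ)))
    (hB : B ∈ supported K (Set.Iio (W.length : ℤ)))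
    (hW : Psched q W = A + B * MvPolynomial.X (W.length : ℤ))
    (hT : ∀ i (h : i < T.length), T[i] ≤ i + 1) :
    Psched q (W ++ T) = MvPolynomial.C (T.map (qint q)).prod *
      (A + B * ∏ j ∈ range (T.length + 1), MvPolynomial.X ((W.length : ℤ) + j)) := by
  induction T using List.reverseRecOn with
  | nil => simpa using hW
  | append_singleton T t ih =>
    have ht : t ≤ T.length + 1 := by simpa using hT T.length (by simp)
    have hPT := ih fun i h => by
      have := hT i (by rw [List.length_append]; omega)
      rwa [List.getElem_append_left h] at this
    set M : MvPolynomial ℤ K :=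
      ∏ j ∈ range (T.length + 1), MvPolynomial.X ((W.length : ℤ) + j)
    have hlen : (((W ++ T).reverse.length : ℕ) : ℤ) = W.length + T.length := by simp [add_comm]
    have hfix : ∀ j ∈ Set.Iio (W.length : ℤ),
        scaleVars q (W ++ T).reverse.length t j = MvPolynomial.X j := by
      intro j hj
      rw [Set.mem_Iio] at hj
      rw [scaleVars, if_neg (by omega)]
    have hscale :
        MvPolynomial.aeval (scaleVars q (W ++ T).reverse.length t) (Psched q (W ++ T)) =
          MvPolynomial.C (T.map (qint q)).prod * (A + MvPolynomial.C (q ^ t) * (B * M)) := by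
      rw [hPT, map_mul, map_add, map_mul, MvPolynomial.aeval_C,
        MvPolynomial.aeval_eq_self_of_mem_supported hA hfix,
        MvPolynomial.aeval_eq_self_of_mem_supported hB hfix, hlen,
        aeval_scaleVars_prod q _ _ _ ht]
      simp only [MvPolynomial.algebraMap_eq]
      ring
    have hqint : MvPolynomial.C (qint q t) =
        MvPolynomial.C (1 - q)⁻¹ * (1 - MvPolynomial.C (q ^ t) : MvPolynomial ℤ K) := by
      rw [qint_eq hq, map_mul, map_sub, map_one]
    rw [← List.append_assoc, Psched, List.reverse_append, List.reverse_singleton,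
      List.singleton_append, prev_cons, ← Psched, hscale, hPT, List.map_append, List.prod_append,
      List.map_singleton, List.prod_singleton, List.length_append, List.length_singleton,
      prod_range_succ, hlen, map_mul, Nat.cast_succ, ← add_assoc]
    linear_combination -(MvPolynomial.C (T.map (qint q)).prod *
      (A + B * M * MvPolynomial.X ((W.length : ℤ) + T.length + 1))) * hqint

lemma exists_psched_concat_eq (hq : q ≠ 1) (W : List ℕ) (u : ℕ) :
    ∃ A B : MvPolynomial ℤ K, A ∈ supported K (Set.Iio ((W ++ [u]).length : ℤ)) ∧
      B ∈ supported K (Set.Iio ((W ++ [u]).length : ℤ)) ∧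
      Psched q (W ++ [u]) = A + B * MvPolynomial.X ((W ++ [u]).length : ℤ) ∧
      A + B = MvPolynomial.C (qint q u) * Psched q W := by
  set S := supported K (Set.Iio ((W ++ [u]).length : ℤ))
  set σP := MvPolynomial.aeval (scaleVars q W.reverse.length u) (Psched q W)
  have hS : supported K (Set.Iic (W.reverse.length : ℤ)) ≤ S :=
    MvPolynomial.supported_mono fun j hj => by
      simp only [Set.mem_Iic, Set.mem_Iio, List.length_reverse, List.length_append,
        List.length_singleton, Nat.cast_add, Nat.cast_one] at hj ⊢
      omega
  have hP : Psched q W ∈ S := hS (prev_mem_supported q W.reverse)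
  have hσP : σP ∈ S := hS (aeval_scaleVars_mem_supported (prev_mem_supported q W.reverse) _ _)
  have hC (c : K) : MvPolynomial.C c ∈ S := Subalgebra.algebraMap_mem _ c
  refine ⟨MvPolynomial.C (1 - q)⁻¹ * (σP - MvPolynomial.C (q ^ u) * Psched q W),
    MvPolynomial.C (1 - q)⁻¹ * (Psched q W - σP),
    mul_mem (hC _) (sub_mem hσP (mul_mem (hC _) hP)), mul_mem (hC _) (sub_mem hP hσP), ?_, ?_⟩
  · rw [Psched, List.reverse_append, List.reverse_singleton, List.singleton_append, prev_cons,
      ← Psched, show ((W ++ [u]).length : ℤ) = W.reverse.length + 1 by simp]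
    ring
  · rw [qint_eq hq, map_mul, map_sub, map_one]
    ring

def toUnivariate : MvPolynomial ℤ K →ₐ[K] K[X] := MvPolynomial.aeval fun _ => X

lemma qsched_eq_toUnivariate (q : K) (W : List ℕ) : Qsched q W = toUnivariate (Psched q W) :=
  rfl

lemma exists_psched_eq_add_mul_X (hq : q ≠ 1) {W : List ℕ} (hW' : TameFE q W.dropLast) :
    ∃ A B : MvPolynomial ℤ K, A ∈ supported K (Set.Iio (W.length : ℤ)) ∧
      B ∈ supported K (Set.Iio (W.length : ℤ)) ∧
      Psched q W = A + B * MvPolynomial.X (W.length : ℤ) ∧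
      SatisfiesFE q W.length (W.map (qint q)).prod (toUnivariate (A + B)) := by
  rcases W.eq_nil_or_concat' with rfl | ⟨W, u, rfl⟩
  · refine ⟨MvPolynomial.C q * MvPolynomial.X (-1), 1,
      mul_mem (Subalgebra.algebraMap_mem _ q) (MvPolynomial.X_mem_supported.2 (by simp)),
      one_mem _, by simp [Psched, Prev], ?_⟩
    simpa [toUnivariate] using SatisfiesFE.C_mul_X_add_one q
  · obtain ⟨A, B, hA, hB, hPW, hAB⟩ := exists_psched_concat_eq hq W u
    refine ⟨A, B, hA, hB, hPW, ?_⟩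
    rw [List.dropLast_concat, tameFE_iff] at hW'
    rw [hAB, map_mul, ← qsched_eq_toUnivariate, List.map_append, List.prod_append,
      List.map_singleton, List.prod_singleton, mul_comm, List.length_append,
      List.length_singleton]
    simpa [toUnivariate] using hW'.C_mul (qint q u)

theorem TameFE.append (hq : q ≠ 1) {W T : List ℕ} (hW' : TameFE q W.dropLast)
    (hW : TameFE q W) (hT : ∀ i (h : i < T.length), T[i] ≤ i + 1) : TameFE q (W ++ T) := by
  obtain ⟨A, B, hA, hB, hPW, hAB⟩ := exists_psched_eq_add_mul_X hq hW'
  have hQW : Qsched q W = toUnivariate A + toUnivariate B * X := by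
    simp [qsched_eq_toUnivariate, hPW, toUnivariate]
  have hQWT : Qsched q (W ++ T) = C (T.map (qint q)).prod *
      (toUnivariate A + toUnivariate B * X ^ (T.length + 1)) := by
    simp [qsched_eq_toUnivariate, psched_append hq hA hB hPW hT, toUnivariate]
  rw [tameFE_iff, hQW] at hW
  rw [map_add] at hAB
  rw [tameFE_iff, hQWT, List.length_append, List.map_append, List.prod_append, mul_comm]
  exact (hAB.add_mul_X_pow hW (T.length + 1)).C_mul _

end Schedule

lemma List.getElem_le_getElem_zero_add {l : List ℕ} (hl : l.IsChain fun a b => b ≤ a + 1) :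
    ∀ i (h : i < l.length), l[i] ≤ l[0] + i
  | 0, _ => le_rfl
  | i + 1, h => by
    have hprev := List.getElem_le_getElem_zero_add hl i (by omega)
    have hstep := hl.getElem i h
    omega

theorem stmt10_general (W : List ℕ)
    (hW' : TameFE qq W.dropLast) (hWt : TameFE qq W) :
    TameFE qq (W ++ [1]) ∧
      ∀ V : List ℕ, Legal (W ++ 1 :: V) → TameFE qq (W ++ 1 :: V) := by
  have tail_le (V : List ℕ) (hV : Legal (W ++ 1 :: V)) (i : ℕ) (h : i < (1 :: V).length) :
      (1 :: V)[i] ≤ i + 1 :=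
    (List.getElem_le_getElem_zero_add (hV.2.right_of_append.imp fun _ _ => And.right) i h).trans_eq
      (add_comm _ _)
  refine ⟨TameFE.append qq_ne_one hW' hWt fun i h => ?_,
    fun V hV => TameFE.append qq_ne_one hW' hWt (tail_le V hV)⟩
  simp_all

/-- Theorem 2.5: if W' = W.dropLast and W are both tame then
(W,1) is tame, and so is every legal schedule (W,1,v_2,…,v_s). -/
theorem stmt10 (W : List ℕ) (hW : Legal W)
    (hW' : TameFE qq W.dropLast) (hWt : TameFE qq W) :
    TameFE qq (W ++ [1]) ∧
      ∀ V : List ℕ, Legal (W ++ 1 :: V) → TameFE qq (W ++ 1 :: V) :=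
  stmt10_general W hW' hWt

end
end

section
/- Let W = (U, v, v+1, V) be a legal schedule in which the increasing pair (v, v+1) at positions h-1, h is not split by any bar, i.e., there is no index r with r - w_r = h. Then Q_{U,v,v+1,V}(x;q) = (1+q) Q_{U,v,v,V}(x;q) - q Q_{U,v-1,v,V}(x;q). -/
open Polynomial Finset

noncomputable section

/-!
`Q_W` is obtained from `P_W` by setting every variable equal to `x`, so it does not change if
`x_h` is first identified with `x_{h-1}` (`Schedule.merge h`); we prove the identity already for
the polynomials `P` after this identification.

For the schedules `U,v,v+1`, `U,v,v` and `U,v-1,v` it is a direct computation: after merging, the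
three polynomials differ only in whether the variable `x_m`, `m = h - 1 - v`, of `P_U` is scaled
by `q²`, by `q`, or not at all. Since `P_U` has degree at most one in each variable, scaling `x_m`
by `q²` equals `(1 + q)` times scaling it by `q` minus `q` times not scaling it.

The identity then propagates through the letters of `V`: each recursion step is linear, and as no
bar starts at `h`, the variables it scales include `x_{h-1}` exactly when they include `x_h`, so the
step commutes with the identification.
-/

namespace MvPolynomial

variable {R σ τ : Type*}

section CommSemiring

variable [CommSemiring R]

def scale (c : σ → R) : MvPolynomial σ R →ₐ[R] MvPolynomial σ R :=
  aeval fun j => C (c j) * X j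

@[simp]
lemma scale_X (c : σ → R) (j : σ) : scale c (X j) = C (c j) * X j :=
  aeval_X _ _

@[simp]
lemma scale_C (c : σ → R) (a : R) : scale c (C a) = C a :=
  (scale c).commutes a

lemma scale_scale (c c' : σ → R) (p : MvPolynomial σ R) :
    scale c (scale c' p) = scale (c * c') p := by
  rw [← AlgHom.comp_apply]
  congr 1
  ext j
  simp [mul_left_comm, mul_comm]

lemma scale_congr {c c' : σ → R} {p : MvPolynomial σ R} (h : ∀ j ∈ p.vars, c j = c' j) :
    scale c p = scale c' p :=
  hom_congr_vars (f₁ := (scale c).toRingHom) (f₂ := (scale c').toRingHom) (by ext; simp)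
    (fun j hj _ => by simp [h j hj]) rfl

lemma scale_monomial (c : σ → R) (d : σ →₀ ℕ) (a : R) :
    scale c (monomial d a) = monomial d ((d.prod fun j e => c j ^ e) * a) := by
  simp only [monomial_eq, map_mul, scale_C, map_finsuppProd, map_pow, scale_X, mul_pow,
    Finsupp.prod_mul]
  ring

lemma coeff_scale (c : σ → R) (p : MvPolynomial σ R) (d : σ →₀ ℕ) :
    coeff d (scale c p) = (d.prod fun j e => c j ^ e) * coeff d p := by
  induction p using MvPolynomial.induction_on' with
  | monomial u a =>
    classical
    rw [scale_monomial, coeff_monomial, coeff_monomial]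
    split_ifs with h <;> simp [h]
  | add p p' hp hp' => simp [hp, hp', mul_add]

lemma degreeOf_scale_le (c : σ → R) (p : MvPolynomial σ R) (j : σ) :
    degreeOf j (scale c p) ≤ degreeOf j p := by
  refine degreeOf_le_iff.mpr fun d hd => monomial_le_degreeOf j ?_
  rw [mem_support_iff] at hd ⊢
  rw [coeff_scale] at hd
  exact right_ne_zero_of_mul hd

lemma rename_scale_comp (f : σ → τ) (c : τ → R) (p : MvPolynomial σ R) :
    rename f (scale (c ∘ f) p) = scale c (rename f p) := by
  rw [← AlgHom.comp_apply, ← AlgHom.comp_apply]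
  congr 1
  ext j
  simp

lemma rename_eq_self_of_forall_mem_vars {f : σ → σ} {p : MvPolynomial σ R}
    (h : ∀ i ∈ p.vars, f i = i) : rename f p = p :=
  calc rename f p = rename id p :=
        hom_congr_vars (f₁ := (rename f).toRingHom) (f₂ := (rename id).toRingHom) (by ext; simp)
          (fun i hi _ => by simp [h i hi]) rfl
    _ = p := rename_id_apply p

end CommSemiring

lemma scale_mulSingle_sq [CommRing R] [DecidableEq σ] {m : σ} {p : MvPolynomial σ R}
    (hp : degreeOf m p ≤ 1) (a : R) :
    scale (Pi.mulSingle m (a ^ 2)) p = C (1 + a) * scale (Pi.mulSingle m a) p - C a * p := by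
  have hprod (b : R) (d : σ →₀ ℕ) :
      (d.prod fun j e => (Pi.mulSingle m b : σ → R) j ^ e) = b ^ d m :=
    (Finsupp.prod_eq_single (g := fun j e => (Pi.mulSingle m b : σ → R) j ^ e) m
      (fun j _ hj => by simp [hj]) (fun _ => pow_zero _)).trans (by simp)
  ext d
  rw [coeff_sub, coeff_C_mul, coeff_C_mul, coeff_scale, coeff_scale, hprod, hprod]
  by_cases hd : d ∈ p.support
  · have : d m ≤ 1 := (degreeOf_le_iff.mp hp) d hd
    interval_cases d m <;> ring
  · rw [notMem_support_iff.mp hd]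
    ring

end MvPolynomial

lemma Legal.one_le {W : List ℕ} (hW : Legal W) : ∀ w ∈ W, 1 ≤ w :=
  hW.2.induction _ W (fun _ _ h _ => h.1) fun hne => (hW.1 hne).1

namespace Schedule

open MvPolynomial

variable (q : K)

def intervalScale (a b : ℤ) : ℤ → K := (Set.Icc a b).mulIndicator fun _ => q

/-- Appending a letter `w` to a schedule of length `n`: the new variable `x_{n+1}` acts on
`x_{n+1-w}, …, x_n` by scaling them by `q`. -/
def step (n : ℤ) (w : ℕ) (p : MvPolynomial ℤ K) : MvPolynomial ℤ K :=
  MvPolynomial.C (1 - q)⁻¹ * ((MvPolynomial.X (n + 1) - MvPolynomial.C (q ^ w)) * p +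
    (1 - MvPolynomial.X (n + 1)) * scale (intervalScale q (n + 1 - w) n) p)

def merge (h : ℤ) (j : ℤ) : ℤ := if j = h then h - 1 else j

lemma psched_append_singleton (W : List ℕ) (w : ℕ) :
    Psched q (W ++ [w]) = step q W.length w (Psched q W) := by
  rw [Psched, List.reverse_append, List.reverse_singleton, List.singleton_append, Prev,
    List.length_reverse, step, Psched, scale]
  congr 5 with j
  simp only [intervalScale, Set.mulIndicator_apply, Set.mem_Icc]
  split_ifs <;> simp

lemma degreeOf_step_le (n : ℤ) (w : ℕ) (p : MvPolynomial ℤ K) (j : ℤ) :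
    degreeOf j (step q n w p) ≤ degreeOf j (X (n + 1) : MvPolynomial ℤ K) + degreeOf j p := by
  refine (degreeOf_C_mul_le _ _ _).trans <| (degreeOf_add_le _ _ _).trans <| max_le ?_ ?_
  · refine (degreeOf_mul_le _ _ _).trans (Nat.add_le_add_right ?_ _)
    exact (degreeOf_sub_le _ _ _).trans (by rw [degreeOf_C, _root_.max_zero])
  · refine (degreeOf_mul_le _ _ _).trans (Nat.add_le_add ?_ (degreeOf_scale_le _ _ _))
    exact (degreeOf_sub_le _ _ _).trans (by rw [degreeOf_one, zero_max])

lemma degreeOf_psched_eq_zero {W : List ℕ} {j : ℤ} (hj : (W.length : ℤ) < j) :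
    degreeOf j (Psched q W) = 0 := by
  induction W using List.reverseRecOn with
  | nil =>
    simp only [List.length_nil, Nat.cast_zero] at hj
    refine Nat.eq_zero_of_le_zero <| (degreeOf_add_le _ _ _).trans <| max_le ?_ ?_
    · exact (degreeOf_C_mul_le _ _ _).trans (degreeOf_X_of_ne (by omega)).le
    · exact (degreeOf_X_of_ne (by omega)).le
  | append_singleton W w ih =>
    simp only [List.length_append, List.length_singleton, Nat.cast_add, Nat.cast_one] at hj
    rw [psched_append_singleton]
    refine Nat.eq_zero_of_le_zero <| (degreeOf_step_le _ _ _ _ _).trans ?_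
    rw [degreeOf_X_of_ne (by omega), ih (by omega)]

lemma degreeOf_psched_le_one (W : List ℕ) (j : ℤ) : degreeOf j (Psched q W) ≤ 1 := by
  induction W using List.reverseRecOn with
  | nil =>
    refine (degreeOf_add_le _ _ _).trans <| max_le ((degreeOf_C_mul_le _ _ _).trans ?_) ?_ <;>
    · rw [degreeOf_X]
      split_ifs <;> simp
  | append_singleton W w ih =>
    rw [psched_append_singleton]
    refine (degreeOf_step_le _ _ _ _ _).trans ?_
    by_cases hj : j = W.length + 1
    · rw [hj, degreeOf_X_self, degreeOf_psched_eq_zero q (by omega)]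
    · rw [degreeOf_X_of_ne hj, zero_add]
      exact ih

lemma step_C_mul_sub_C_mul (n : ℤ) (w : ℕ) (a b : K) (p p' : MvPolynomial ℤ K) :
    step q n w (MvPolynomial.C a * p - MvPolynomial.C b * p') =
      MvPolynomial.C a * step q n w p - MvPolynomial.C b * step q n w p' := by
  simp only [step, map_sub, map_mul, scale_C]
  ring

lemma scale_step (c : ℤ → K) (n : ℤ) (w : ℕ) (p : MvPolynomial ℤ K) :
    scale c (step q n w p) =
      MvPolynomial.C (1 - q)⁻¹ *
        ((MvPolynomial.C (c (n + 1)) * MvPolynomial.X (n + 1) - MvPolynomial.C (q ^ w)) *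
            scale c p +
          (1 - MvPolynomial.C (c (n + 1)) * MvPolynomial.X (n + 1)) *
            scale (c * intervalScale q (n + 1 - w) n) p) := by
  simp only [step, map_mul, map_add, map_sub, map_one, scale_C, scale_X, scale_scale]

lemma intervalScale_eq_mul_mulSingle {a b : ℤ} (hab : a ≤ b) :
    intervalScale q a b = intervalScale q (a + 1) b * Pi.mulSingle a q := by
  ext j
  simp only [intervalScale, Pi.mul_apply, Set.mulIndicator_apply, Set.mem_Icc, Pi.mulSingle_apply]
  split_ifs <;> first | omega | simp

lemma rename_merge_of_degreeOf_eq_zero {h : ℤ} {p : MvPolynomial ℤ K} (hp : degreeOf h p = 0) :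
    rename (merge h) p = p :=
  rename_eq_self_of_forall_mem_vars fun i hi =>
    if_neg fun hih : i = h => mem_vars_iff_degreeOf_ne_zero.mp hi (hih ▸ hp)

lemma rename_merge_step {h n : ℤ} {w : ℕ} (hn : h ≤ n) (hw : n + 1 - w ≠ h)
    (p : MvPolynomial ℤ K) :
    rename (merge h) (step q n w p) = step q n w (rename (merge h) p) := by
  have hmerge : merge h (n + 1) = n + 1 := if_neg (by omega)
  have hscale : intervalScale q (n + 1 - w) n ∘ merge h = intervalScale q (n + 1 - w) n := by
    ext j
    simp only [Function.comp_apply, merge, intervalScale, Set.mulIndicator_apply, Set.mem_Icc]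
    split_ifs <;> first | rfl | omega
  simp only [step, map_mul, map_add, map_sub, map_one, rename_C, rename_X, hmerge]
  conv_lhs => rw [← hscale, rename_scale_comp]

lemma rename_merge_step_step {n : ℤ} {B : MvPolynomial ℤ K}
    (hB : ∀ j, n < j → degreeOf j B = 0) (a : ℕ) {b : ℕ} (hb : 1 ≤ b) :
    rename (merge (n + 2)) (step q (n + 1) b (step q n a B)) =
      MvPolynomial.C (1 - q)⁻¹ *
        ((MvPolynomial.X (n + 1) - MvPolynomial.C (q ^ b)) * step q n a B +
          (1 - MvPolynomial.X (n + 1)) * (MvPolynomial.C (1 - q)⁻¹ *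
            ((MvPolynomial.C q * MvPolynomial.X (n + 1) - MvPolynomial.C (q ^ a)) *
                scale (intervalScale q (n + 2 - b) n) B +
              (1 - MvPolynomial.C q * MvPolynomial.X (n + 1)) *
                scale (intervalScale q (n + 2 - b) n * intervalScale q (n + 1 - a) n) B))) := by
  have hA : degreeOf (n + 2) (step q n a B) = 0 := Nat.eq_zero_of_le_zero <|
    (degreeOf_step_le q n a B _).trans (by rw [degreeOf_X_of_ne (by omega), hB _ (by omega)])
  have hcongr (c : ℤ → K) : scale (intervalScale q (n + 2 - b) (n + 1) * c) B =
      scale (intervalScale q (n + 2 - b) n * c) B := by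
    refine scale_congr fun j hj => ?_
    have hjn : j ≤ n := not_lt.mp fun h => mem_vars_iff_degreeOf_ne_zero.mp hj (hB j h)
    simp only [Pi.mul_apply, intervalScale, Set.mulIndicator_apply, Set.mem_Icc]
    split_ifs <;> first | rfl | omega
  have hcongr₁ : scale (intervalScale q (n + 2 - b) (n + 1)) B =
      scale (intervalScale q (n + 2 - b) n) B := by
    simpa using hcongr 1
  have hq : intervalScale q (n + 2 - b) (n + 1) (n + 1) = q :=
    Set.mulIndicator_of_mem (Set.mem_Icc.mpr ⟨by omega, le_rfl⟩) _
  rw [step, show n + 1 + 1 = n + 2 by ring, map_mul, map_add, map_mul, map_mul, map_sub, map_sub,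
    map_one, rename_C, rename_C, rename_X, merge, if_pos rfl, show n + 2 - 1 = n + 1 by ring,
    rename_merge_of_degreeOf_eq_zero hA,
    rename_merge_of_degreeOf_eq_zero
      (Nat.eq_zero_of_le_zero ((degreeOf_scale_le _ _ _).trans hA.le)),
    scale_step, hq, hcongr, hcongr₁]

lemma psched_append_pair (U : List ℕ) (a b : ℕ) :
    Psched q (U ++ [a, b]) = step q ((U.length : ℤ) + 1) b (step q U.length a (Psched q U)) := by
  rw [show U ++ [a, b] = U ++ [a] ++ [b] by simp, psched_append_singleton, psched_append_singleton,
    List.length_append, List.length_singleton, Nat.cast_add, Nat.cast_one]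

lemma rename_merge_psched_pair (U : List ℕ) {v : ℕ} (hv : 1 ≤ v) :
    rename (merge (U.length + 2)) (Psched q (U ++ [v, v + 1])) =
      MvPolynomial.C (1 + q) * rename (merge (U.length + 2)) (Psched q (U ++ [v, v])) -
        MvPolynomial.C q * rename (merge (U.length + 2)) (Psched q (U ++ [v - 1, v])) := by
  obtain ⟨k, rfl⟩ := Nat.exists_eq_add_of_le' hv
  simp only [psched_append_pair, Nat.add_sub_cancel]
  set n : ℤ := (U.length : ℤ)
  set B := Psched q U
  have hB (j : ℤ) (hj : n < j) : degreeOf j B = 0 := degreeOf_psched_eq_zero q hj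
  rw [rename_merge_step_step q hB _ (by omega), rename_merge_step_step q hB _ (by omega),
    rename_merge_step_step q hB _ (by omega)]
  set E := intervalScale q (n - k) n
  set F := intervalScale q (n - k + 1) n
  have hE : E = F * Pi.mulSingle (n - k) q := intervalScale_eq_mul_mulSingle q (by omega)
  have hEE : scale (E * E) B =
      MvPolynomial.C (1 + q) * scale (F * E) B - MvPolynomial.C q * scale (F * F) B := by
    have : E * E = F * F * Pi.mulSingle (n - k) (q ^ 2) := by rw [hE, Pi.mulSingle_pow]; ring
    rw [this, ← scale_scale, scale_mulSingle_sq (degreeOf_psched_le_one q U _), map_sub, map_mul,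
      map_mul, scale_C, scale_C, scale_scale, hE, mul_assoc]
  have e₁ : intervalScale q (n + 1 - ↑(k + 1)) n = E := by congr 1; push_cast; ring
  have e₂ : intervalScale q (n + 2 - ↑(k + 1 + 1)) n = E := by congr 1; push_cast; ring
  have e₃ : intervalScale q (n + 2 - ↑(k + 1)) n = F := by congr 1; push_cast; ring
  have e₄ : intervalScale q (n + 1 - ↑k) n = F := by congr 1; ring
  simp only [step, e₁, e₂, e₃, e₄, hEE, map_add, map_one, map_pow]
  ring

lemma rename_merge_psched_append {M₁ M₂ M₃ : List ℕ} (h₂ : M₂.length = M₁.length)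
    (h₃ : M₃.length = M₁.length) {a b : K}
    (hM : rename (merge M₁.length) (Psched q M₁) =
      MvPolynomial.C a * rename (merge M₁.length) (Psched q M₂) -
        MvPolynomial.C b * rename (merge M₁.length) (Psched q M₃))
    {V : List ℕ} (hV : ∀ (j : ℕ) (hj : j < V.length), V[j] ≠ j + 1) :
    rename (merge M₁.length) (Psched q (M₁ ++ V)) =
      MvPolynomial.C a * rename (merge M₁.length) (Psched q (M₂ ++ V)) -
        MvPolynomial.C b * rename (merge M₁.length) (Psched q (M₃ ++ V)) := by
  induction V using List.reverseRecOn with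
  | nil => simpa using hM
  | append_singleton V w ih =>
    have hw : w ≠ V.length + 1 := by simpa using hV V.length (by simp)
    have ih := ih fun j hj => by
      have := hV j (by simp; omega)
      rwa [List.getElem_append_left hj] at this
    simp only [← List.append_assoc, psched_append_singleton, List.length_append, h₂, h₃]
    have hn : (M₁.length : ℤ) ≤ ↑(M₁.length + V.length) := by omega
    have hw' : ↑(M₁.length + V.length) + 1 - (w : ℤ) ≠ M₁.length := by omega
    rw [rename_merge_step q hn hw', rename_merge_step q hn hw', rename_merge_step q hn hw', ih,
      step_C_mul_sub_C_mul]

lemma qsched_eq_aeval_rename (f : ℤ → ℤ) (W : List ℕ) :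
    Qsched q W = MvPolynomial.aeval (fun _ => Polynomial.X) (rename f (Psched q W)) := by
  rw [aeval_rename]
  rfl

end Schedule

/-- Proposition 3.3: let W = (U, v, v+1, V) be a legal schedule in
which no bar splits the increasing pair at positions h-1, h (h = U.length + 2):
there is no index r (1-based) with r - w_r = h. Then
Q_{U,v,v+1,V} = (1+q)·Q_{U,v,v,V} - q·Q_{U,v-1,v,V}. -/
theorem stmt13 (U V : List ℕ) (v : ℕ)
    (hW : Legal (U ++ v :: (v + 1) :: V))
    (hsplit : ∀ r : ℕ, r < (U ++ v :: (v + 1) :: V).length →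
      ((r : ℤ) + 1) - ((U ++ v :: (v + 1) :: V).getD r 0 : ℤ) ≠ (U.length : ℤ) + 2) :
    Qsched qq (U ++ v :: (v + 1) :: V) =
      Polynomial.C (1 + qq) * Qsched qq (U ++ v :: v :: V) -
        Polynomial.C qq * Qsched qq (U ++ (v - 1) :: v :: V) := by
  have hv : 1 ≤ v := hW.one_le v (by simp)
  have hV (j : ℕ) (hj : j < V.length) : V[j] ≠ j + 1 := fun hVj => by
    refine hsplit (U.length + 2 + j) (by simp; omega) ?_
    rw [List.getD_eq_getElem _ _ (by simp; omega), List.getElem_append_right (by omega)]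
    simp only [show U.length + 2 + j - U.length = j + 2 by omega, List.getElem_cons_succ, hVj]
    push_cast
    ring
  have hpair := Schedule.rename_merge_psched_pair qq U hv
  rw [show (U.length : ℤ) + 2 = (U ++ [v, v + 1]).length by simp] at hpair
  have key := Schedule.rename_merge_psched_append qq (by simp) (by simp) hpair hV
  simp only [List.append_assoc, List.cons_append, List.nil_append] at key
  rw [Schedule.qsched_eq_aeval_rename qq (Schedule.merge (U ++ [v, v + 1]).length), key,
    map_sub, map_mul, map_mul, ← Schedule.qsched_eq_aeval_rename,
    ← Schedule.qsched_eq_aeval_rename, MvPolynomial.aeval_C, MvPolynomial.aeval_C,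
    Polynomial.algebraMap_eq]

end
end

section
/- The vector space of polynomials Q(x,q) = Σ_{i=1}^k A_i(q) x^i (over the field of rational functions in q) satisfying (1-q/x)Q(x) + x^k(1-qx)Q(1/x) = (1+x^k)(A_k(q) - q A_1(q)) has dimension ⌊(k+1)/2⌋, with explicit basis: for k = 2a, the polynomials E_{j,k}(x;q) = Σ_{i=1}^j (q^{2j-i} x^i + q^{i-1} x^{2a+1-i}) for 1 ≤ j ≤ a; for k = 2a-1, the polynomials O_{j,k}(x;q) = Σ_{i=1}^j (q^{2j-i} x^i + q^{i-1} x^{2a-i}) for 1 ≤ j ≤ a-1, together with O_{a,k}(x;q) = Σ_{i=1}^{a-1} q^{2a-i-1} x^i + Σ_{i=1}^a q^{i-1} x^{2a-i}. -/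
/-!
Multiplied by `x`, the functional equation says that `P = (x - q) Q` plus its reversal
`x ^ (k + 2) P (1 / x)` equals `c (x + x ^ (k + 1))`. As this holds for all `x ≠ 0` in an infinite
field, it is a polynomial identity, i.e. the linear relations
`A_s + A_{k-s} = q (A_{s+1} + A_{k+1-s})`. Read at `s = n - 1` for `n > ⌊(k+1)/2⌋`, a relation
expresses `q A_n` or `2 q A_n` through lower coefficients, so a solution is determined by
`A_1, …, A_⌊(k+1)/2⌋` and the solution space has dimension at most `⌊(k+1)/2⌋`.
Each basis polynomial is the sum of two geometric blocks of coefficients; hence `(x - q) Q` has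
only two middle coefficients, at symmetric positions, and the relations hold. Their coefficients
at `x, …, x ^ ⌊(k+1)/2⌋` form a triangular matrix with powers of `q` on the diagonal, which gives
linear independence and, by counting dimensions, the span.
-/


open Polynomial Finset

noncomputable section

/-- The set of polynomials Q(x) = Σ_{i=1}^k A_i x^i (zero constant term, degree
at most k) satisfying the functional equation
(1-q/x)Q(x) + x^k(1-qx)Q(1/x) = (1+x^k)(A_k - qA_1). -/
def FEset (k : ℕ) : Set (Polynomial K) :=
  {Q : Polynomial K |
    Q.coeff 0 = 0 ∧ Q.natDegree ≤ k ∧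
      ∀ x : K, x ≠ 0 →
        (1 - qq / x) * Q.eval x + x ^ k * (1 - qq * x) * Q.eval x⁻¹ =
          (1 + x ^ k) * (Q.coeff k - qq * Q.coeff 1)}

/-- The basis family: for k = 2a the polynomials
E_{j,k} = Σ_{i=1}^j (q^{2j-i} x^i + q^{i-1} x^{2a+1-i}), 1 ≤ j ≤ a; for
k = 2a-1 the polynomials O_{j,k} = Σ_{i=1}^j (q^{2j-i} x^i + q^{i-1} x^{2a-i})
for 1 ≤ j ≤ a-1 together with
O_{a,k} = Σ_{i=1}^{a-1} q^{2a-i-1} x^i + Σ_{i=1}^a q^{i-1} x^{2a-i}.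
(In both cases the second exponent is k + 1 - i, and there are ⌊(k+1)/2⌋ of them.) -/
def Bfun (k : ℕ) (j : Fin ((k + 1) / 2)) : Polynomial K :=
  if k % 2 = 1 ∧ j.val + 1 = (k + 1) / 2 then
    ∑ i ∈ Finset.Icc 1 ((k + 1) / 2 - 1), Polynomial.C (qq ^ (k - i)) * Polynomial.X ^ i +
      ∑ i ∈ Finset.Icc 1 ((k + 1) / 2), Polynomial.C (qq ^ (i - 1)) * Polynomial.X ^ (k + 1 - i)
  else
    ∑ i ∈ Finset.Icc 1 (j.val + 1),
      (Polynomial.C (qq ^ (2 * (j.val + 1) - i)) * Polynomial.X ^ i +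
        Polynomial.C (qq ^ (i - 1)) * Polynomial.X ^ (k + 1 - i))

section FunctionalEquation

variable {F : Type*} [Field F]

theorem eval_reflect_of_ne_zero {N : ℕ} {f : F[X]} (hf : f.natDegree ≤ N) {x : F} (hx : x ≠ 0) :
    (reflect N f).eval x = x ^ N * f.eval x⁻¹ := by
  let := invertibleOfNonzero (inv_ne_zero hx)
  have h := eval₂_reflect_mul_pow (RingHom.id F) x⁻¹ N f hf
  rw [invOf_eq_inv, inv_inv, inv_pow, ← eval, ← eval] at h
  rw [← h]
  field_simp

theorem functionalEquation_iff [Infinite F] (q c : F) {k : ℕ} {Q : F[X]} (hQ : Q.natDegree ≤ k) :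
    (∀ x : F, x ≠ 0 →
        (1 - q / x) * Q.eval x + x ^ k * (1 - q * x) * Q.eval x⁻¹ = (1 + x ^ k) * c) ↔
      (X - C q) * Q + reflect (k + 2) ((X - C q) * Q) = C c * (X + X ^ (k + 1)) := by
  have hP : ((X - C q) * Q).natDegree ≤ k + 2 :=
    (natDegree_mul_le.trans (add_le_add (natDegree_X_sub_C_le q) hQ)).trans (by omega)
  have heval : ∀ x : F, x ≠ 0 →
      ((X - C q) * Q + reflect (k + 2) ((X - C q) * Q)).eval x =
        x * ((1 - q / x) * Q.eval x + x ^ k * (1 - q * x) * Q.eval x⁻¹) := by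
    intro x hx
    rw [eval_add, eval_reflect_of_ne_zero hP hx]
    simp only [eval_mul, eval_sub, eval_X, eval_C]
    field_simp
    ring
  have hc : ∀ x : F, (C c * (X + X ^ (k + 1))).eval x = x * ((1 + x ^ k) * c) := by
    intro x
    simp only [eval_mul, eval_C, eval_add, eval_X, eval_pow]
    ring
  constructor
  · intro h
    refine eq_of_infinite_eval_eq _ _ (Set.Infinite.mono (fun x (hx : x ≠ 0) => ?_)
      (Set.finite_singleton (0 : F)).infinite_compl)
    simp only [Set.mem_ofPred_eq, heval x hx, h x hx, hc]
  · intro h x hx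
    have := congrArg (eval x) h
    rw [heval x hx, hc] at this
    exact mul_left_cancel₀ hx this

end FunctionalEquation

section CoeffRelations

variable {F : Type*} [CommRing F]

def CoeffRelations (q : F) (k : ℕ) (c : ℕ → F) : Prop :=
  ∀ s, 0 < s → s < k → c s + c (k - s) = q * (c (s + 1) + c (k + 1 - s))

theorem coeffRelations_of_sub_mul_succ {q : F} {k : ℕ} {c : ℕ → F}
    (h : ∀ s, 0 < s → s < k → c s - q * c (s + 1) + (c (k - s) - q * c (k - s + 1)) = 0) :
    CoeffRelations q k c := fun s hs hsk => by
  rw [show k + 1 - s = k - s + 1 by omega]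
  linear_combination h s hs hsk

theorem coeff_X_sub_C_mul_succ (q : F) (Q : F[X]) (n : ℕ) :
    ((X - C q) * Q).coeff (n + 1) = Q.coeff n - q * Q.coeff (n + 1) := by
  rw [mul_comm, coeff_mul_X_sub_C, mul_comm]

theorem reflect_add_eq_iff_coeffRelations (q : F) {k : ℕ} {Q : F[X]} (h0 : Q.coeff 0 = 0)
    (hQ : Q.natDegree ≤ k) :
    (X - C q) * Q + reflect (k + 2) ((X - C q) * Q) =
        C (Q.coeff k - q * Q.coeff 1) * (X + X ^ (k + 1)) ↔
      CoeffRelations q k Q.coeff := by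
  have hz : ∀ n, k < n → Q.coeff n = 0 := fun n hn => coeff_eq_zero_of_natDegree_lt (hQ.trans_lt hn)
  have hP0 : ((X - C q) * Q).coeff 0 = 0 := by simp [h0]
  have hlhs : ∀ n ≤ k, ((X - C q) * Q + reflect (k + 2) ((X - C q) * Q)).coeff (n + 1) =
      Q.coeff n - q * Q.coeff (n + 1) + (Q.coeff (k - n) - q * Q.coeff (k - n + 1)) := by
    intro n hn
    rw [coeff_add, coeff_reflect, revAt_le (by omega), show k + 2 - (n + 1) = k - n + 1 by omega,
      coeff_X_sub_C_mul_succ, coeff_X_sub_C_mul_succ]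
  have hrhs : ∀ n, (C (Q.coeff k - q * Q.coeff 1) * (X + X ^ (k + 1))).coeff (n + 1) =
      (if n = 0 then Q.coeff k - q * Q.coeff 1 else 0) +
        (if n = k then Q.coeff k - q * Q.coeff 1 else 0) := by
    intro n
    simp only [mul_add, coeff_add, coeff_C_mul_X, coeff_C_mul_X_pow, Nat.add_eq_right,
      Nat.add_right_cancel_iff]
  constructor
  · intro h s hs hsk
    have hs' := congrArg (coeff · (s + 1)) h
    simp only [hlhs s hsk.le, hrhs, if_neg hs.ne', if_neg hsk.ne, add_zero] at hs'
    rw [show k + 1 - s = k - s + 1 by omega]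
    linear_combination hs'
  · intro h
    ext n
    rcases n with _ | n
    · simp [coeff_reflect, hP0, coeff_X_sub_C_mul_succ, hz (k + 1) (by omega),
        hz (k + 2) (by omega)]
    rw [hrhs]
    by_cases hn : n ≤ k
    · rw [hlhs n hn]
      rcases Nat.eq_zero_or_pos n with rfl | hn0
      · rcases Nat.eq_zero_or_pos k with rfl | hk
        · simp
        · simp only [if_pos, if_neg hk.ne, Nat.sub_zero, h0, hz (k + 1) (by omega)]
          ring
      rcases hn.lt_or_eq with hnk | rfl
      · rw [if_neg hn0.ne', if_neg hnk.ne, add_zero, ← show k + 1 - n = k - n + 1 by omega]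
        linear_combination h n hn0 hnk
      · simp only [if_pos, if_neg hn0.ne', Nat.sub_self, h0, hz (n + 1) (by omega)]
        ring
    · rw [if_neg (by omega), if_neg (by omega), coeff_add, coeff_reflect, coeff_X_sub_C_mul_succ,
        hz n (by omega), hz (n + 1) (by omega)]
      rcases (show n = k + 1 ∨ k + 1 < n by omega) with rfl | hn'
      · rw [revAt_le le_rfl, Nat.sub_self, hP0]
        ring
      · rw [revAt_eq_self_of_lt (by omega), coeff_X_sub_C_mul_succ, hz n (by omega),
          hz (n + 1) (by omega)]
        ring

end CoeffRelations

section SolutionSpace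

variable {F : Type*} [Field F]

def solutionSpace (q : F) (k : ℕ) : Submodule F F[X] where
  carrier := {Q | Q.coeff 0 = 0 ∧ Q.natDegree ≤ k ∧ CoeffRelations q k Q.coeff}
  add_mem' := by
    rintro P Q ⟨hP0, hPk, hP⟩ ⟨hQ0, hQk, hQ⟩
    refine ⟨by simp [hP0, hQ0], natDegree_add_le_of_degree_le hPk hQk, fun s hs hsk => ?_⟩
    simp only [coeff_add]
    linear_combination hP s hs hsk + hQ s hs hsk
  zero_mem' := ⟨coeff_zero 0, by simp, fun s _ _ => by simp⟩
  smul_mem' := by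
    rintro a Q ⟨hQ0, hQk, hQ⟩
    refine ⟨by simp [hQ0], (natDegree_smul_le a Q).trans hQk, fun s hs hsk => ?_⟩
    simp only [coeff_smul, smul_eq_mul]
    linear_combination a * hQ s hs hsk

theorem eq_zero_of_mem_solutionSpace {q : F} (hq : q ≠ 0) (h2 : (2 : F) ≠ 0) {k : ℕ} {Q : F[X]}
    (hQ : Q ∈ solutionSpace q k) (hlow : ∀ t, 0 < t → t ≤ (k + 1) / 2 → Q.coeff t = 0) :
    Q = 0 := by
  obtain ⟨h0, hk, hrel⟩ := hQ
  suffices h : ∀ n, Q.coeff n = 0 by ext n; simp [h]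
  intro n
  induction n using Nat.strong_induction_on with
  | _ n ih =>
  rcases Nat.eq_zero_or_pos n with rfl | hn0
  · exact h0
  by_cases hnm : n ≤ (k + 1) / 2
  · exact hlow n hn0 hnm
  by_cases hnk : k < n
  · exact coeff_eq_zero_of_natDegree_lt (hk.trans_lt hnk)
  -- the relation at `s = n - 1` gives `q (A_n + A_{k+2-n}) = 0`, and `k + 2 - n ≤ n`
  have hs := hrel (n - 1) (by omega) (by omega)
  rw [Nat.sub_add_cancel hn0, ih (n - 1) (by omega), ih (k - (n - 1)) (by omega), zero_add] at hs
  rcases (show k + 1 - (n - 1) = n ∨ k + 1 - (n - 1) < n by omega) with he | hlt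
  · rw [he] at hs
    have h : q * 2 * Q.coeff n = 0 := by linear_combination -hs
    simpa [hq, h2] using h
  · rw [ih _ hlt, add_zero] at hs
    exact (mul_eq_zero.mp hs.symm).resolve_left hq

variable (F) in
def lowCoeffs (k : ℕ) : F[X] →ₗ[F] Fin ((k + 1) / 2) → F :=
  LinearMap.pi fun j => lcoeff F (j + 1)

theorem injective_lowCoeffs_comp_subtype {q : F} (hq : q ≠ 0) (h2 : (2 : F) ≠ 0) (k : ℕ) :
    Function.Injective ((lowCoeffs F k).comp (solutionSpace q k).subtype) := by
  rw [← LinearMap.ker_eq_bot, LinearMap.ker_eq_bot']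
  intro Q hQ
  refine Subtype.ext (eq_zero_of_mem_solutionSpace hq h2 Q.2 fun t ht htm => ?_)
  simpa [lowCoeffs, Nat.sub_add_cancel ht] using congrFun hQ ⟨t - 1, by omega⟩

theorem finiteDimensional_solutionSpace {q : F} (hq : q ≠ 0) (h2 : (2 : F) ≠ 0) (k : ℕ) :
    FiniteDimensional F (solutionSpace q k) :=
  Module.Finite.of_injective _ (injective_lowCoeffs_comp_subtype hq h2 k)

theorem finrank_solutionSpace_le {q : F} (hq : q ≠ 0) (h2 : (2 : F) ≠ 0) (k : ℕ) :
    Module.finrank F (solutionSpace q k) ≤ (k + 1) / 2 := by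
  simpa using LinearMap.finrank_le_finrank_of_injective (injective_lowCoeffs_comp_subtype hq h2 k)

end SolutionSpace

theorem mem_FEset_iff (k : ℕ) (Q : K[X]) : Q ∈ FEset k ↔ Q ∈ solutionSpace qq k :=
  and_congr_right fun h0 => and_congr_right fun hk =>
    (functionalEquation_iff qq _ hk).trans (reflect_add_eq_iff_coeffRelations qq h0 hk)

section GeomBlock

variable {F : Type*} [CommRing F]

def geomBlock (q : F) (a b e n : ℕ) : F :=
  if a ≤ n ∧ n ≤ b then q ^ (e - n) else 0

theorem coeff_sum_Icc_C_pow_mul_X_pow (q : F) (a b e n : ℕ) :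
    (∑ i ∈ Icc a b, C (q ^ (e - i)) * X ^ i).coeff n = geomBlock q a b e n := by
  simp only [finsetSum_coeff, coeff_C_mul_X_pow, Finset.sum_ite_eq, Finset.mem_Icc, geomBlock]

theorem coeff_sum_Icc_C_pow_mul_X_pow_rev (q : F) {J k : ℕ} (hJ : J ≤ k) (n : ℕ) :
    (∑ i ∈ Icc 1 J, C (q ^ (i - 1)) * X ^ (k + 1 - i)).coeff n = geomBlock q (k + 1 - J) k k n := by
  simp only [finsetSum_coeff, coeff_C_mul_X_pow, geomBlock]
  split_ifs with h
  · rw [Finset.sum_eq_single (k + 1 - n) (fun i hi hne => if_neg (by grind))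
      (fun h' => absurd (Finset.mem_Icc.mpr (by omega)) h'), if_pos (by omega)]
    congr 1
    omega
  · exact Finset.sum_eq_zero fun i hi => if_neg (by grind)

theorem geomBlock_sub_mul_succ (q : F) {a b e : ℕ} (hab : a ≤ b + 1) (hbe : b ≤ e) (s : ℕ) :
    geomBlock q a b e s - q * geomBlock q a b e (s + 1) =
      (if s = b then q ^ (e - b) else 0) - (if s + 1 = a then q ^ (e + 1 - a) else 0) := by
  unfold geomBlock
  split_ifs <;> try omega
  · rw [show e - s = e - (s + 1) + 1 by omega, pow_succ]
    ring
  · rw [show s = b by omega]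
    ring
  · rw [show e + 1 - a = e - (s + 1) + 1 by omega, pow_succ]
    ring
  · rw [show e + 1 - a = e - b by omega]
    ring
  · ring

/-- Away from the ends, `(X - q) Q` has only the coefficients `q ^ (e - b)` at `b + 1` and
`-q ^ (k + 1 - a)` at `a`: positions swapped by `n ↦ k + 2 - n`, or equal. -/
theorem coeffRelations_geomBlock_add_geomBlock (q : F) {k a b e : ℕ}
    (ha : a ≤ k + 1) (hb : b ≤ e) (hab : b + a = k + 1 ∨ b + 1 = a) (he : e - b = k + 1 - a) :
    CoeffRelations q k fun n => geomBlock q 1 b e n + geomBlock q a k k n := by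
  have hD : ∀ t, geomBlock q 1 b e t + geomBlock q a k k t -
      q * (geomBlock q 1 b e (t + 1) + geomBlock q a k k (t + 1)) =
        (if t = b then q ^ (e - b) else 0) - (if t + 1 = 1 then q ^ (e + 1 - 1) else 0) +
          ((if t = k then q ^ (k - k) else 0) - (if t + 1 = a then q ^ (k + 1 - a) else 0)) := by
    intro t
    rw [← geomBlock_sub_mul_succ q (by omega) hb, ← geomBlock_sub_mul_succ q ha le_rfl]
    ring
  refine coeffRelations_of_sub_mul_succ fun s hs hsk => ?_
  rw [hD, hD, he]
  split_ifs <;> first | omega | ring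

end GeomBlock

theorem qq_ne_zero : qq ≠ 0 := RatFunc.X_ne_zero

theorem coeff_Bfun (k : ℕ) (j : Fin ((k + 1) / 2)) (n : ℕ) :
    (Bfun k j).coeff n =
      if k % 2 = 1 ∧ j.val + 1 = (k + 1) / 2 then
        geomBlock qq 1 ((k + 1) / 2 - 1) k n + geomBlock qq ((k + 1) / 2) k k n
      else geomBlock qq 1 (j + 1) (2 * (j + 1)) n + geomBlock qq (k - j) k k n := by
  have hj := j.isLt
  unfold Bfun
  split_ifs with h
  · rw [coeff_add, coeff_sum_Icc_C_pow_mul_X_pow, coeff_sum_Icc_C_pow_mul_X_pow_rev qq (by omega),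
      show k + 1 - (k + 1) / 2 = (k + 1) / 2 by omega]
  · rw [sum_add_distrib, coeff_add, coeff_sum_Icc_C_pow_mul_X_pow,
      coeff_sum_Icc_C_pow_mul_X_pow_rev qq (by omega), show k + 1 - (j + 1) = k - j by omega]

theorem Bfun_mem_solutionSpace (k : ℕ) (j : Fin ((k + 1) / 2)) : Bfun k j ∈ solutionSpace qq k := by
  have hj := j.isLt
  refine ⟨?_, natDegree_le_iff_coeff_eq_zero.mpr fun n hn => ?_, ?_⟩
  · rw [coeff_Bfun]
    unfold geomBlock
    split_ifs <;> first | omega | ring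
  · rw [coeff_Bfun]
    unfold geomBlock
    split_ifs <;> first | omega | ring
  · by_cases h : k % 2 = 1 ∧ j.val + 1 = (k + 1) / 2
    · have hc : (Bfun k j).coeff = fun n =>
          geomBlock qq 1 ((k + 1) / 2 - 1) k n + geomBlock qq ((k + 1) / 2) k k n :=
        _root_.funext fun n => by rw [coeff_Bfun, if_pos h]
      rw [hc]
      exact coeffRelations_geomBlock_add_geomBlock qq (by omega) (by omega) (by omega) (by omega)
    · have hc : (Bfun k j).coeff = fun n =>
          geomBlock qq 1 (j + 1) (2 * (j + 1)) n + geomBlock qq (k - j) k k n :=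
        _root_.funext fun n => by rw [coeff_Bfun, if_neg h]
      rw [hc]
      exact coeffRelations_geomBlock_add_geomBlock qq (by omega) (by omega) (by omega) (by omega)

theorem coeff_Bfun_succ_self_ne_zero (k : ℕ) (j : Fin ((k + 1) / 2)) :
    (Bfun k j).coeff (j + 1) ≠ 0 := by
  have hj := j.isLt
  rw [coeff_Bfun]
  unfold geomBlock
  split_ifs <;> first | omega | simp [qq_ne_zero]

theorem coeff_Bfun_succ_of_lt (k : ℕ) {i j : Fin ((k + 1) / 2)} (hij : i < j) :
    (Bfun k i).coeff (j + 1) = 0 := by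
  have hj := j.isLt
  have hij' : i.val < j.val := hij
  rw [coeff_Bfun]
  unfold geomBlock
  split_ifs <;> first | omega | simp

theorem linearIndependent_Bfun (k : ℕ) : LinearIndependent K (Bfun k) := by
  let M : Matrix (Fin ((k + 1) / 2)) (Fin ((k + 1) / 2)) K := fun i j => (Bfun k i).coeff (j + 1)
  have hM : M.det ≠ 0 := by
    rw [Matrix.det_of_isLowerTriangular M fun i j hij => coeff_Bfun_succ_of_lt k hij]
    exact prod_ne_zero_iff.mpr fun j _ => coeff_Bfun_succ_self_ne_zero k j
  exact LinearIndependent.of_comp (lowCoeffs K k) (Matrix.linearIndependent_rows_of_det_ne_zero hM)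

theorem stmt19_general (k : ℕ) :
    LinearIndependent K (Bfun k) ∧
      (Submodule.span K (Set.range (Bfun k)) : Set (Polynomial K)) = FEset k ∧
        Module.finrank K (Submodule.span K (Set.range (Bfun k))) = (k + 1) / 2 := by
  have hind := linearIndependent_Bfun k
  have hrank : Module.finrank K (Submodule.span K (Set.range (Bfun k))) = (k + 1) / 2 := by
    rw [finrank_span_eq_card hind, Fintype.card_fin]
  have := finiteDimensional_solutionSpace qq_ne_zero two_ne_zero k
  have hspan : Submodule.span K (Set.range (Bfun k)) = solutionSpace qq k :=
    Submodule.eq_of_le_of_finrank_le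
      (Submodule.span_le.mpr (Set.range_subset_iff.mpr (Bfun_mem_solutionSpace k)))
      (hrank.symm ▸ finrank_solutionSpace_le qq_ne_zero two_ne_zero k)
  refine ⟨hind, ?_, hrank⟩
  ext Q
  rw [mem_FEset_iff, hspan, SetLike.mem_coe]

/-- Theorem 4.4: the space of solutions of the functional equation
is ⌊(k+1)/2⌋-dimensional, with the explicit basis E_{j,k} (k even) or O_{j,k}
(k odd). -/
theorem stmt19 (k : ℕ) (hk : 1 ≤ k) :
    LinearIndependent K (Bfun k) ∧
      (Submodule.span K (Set.range (Bfun k)) : Set (Polynomial K)) = FEset k ∧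
        Module.finrank K (Submodule.span K (Set.range (Bfun k))) = (k + 1) / 2 :=
  stmt19_general k

end
end
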